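/- arXiv:2510.05680 — 8 statements merged into one kernel-verified Lean document; each statement's English description precedes it below -/
import Mathlib

section
/- In the one-step BDAR(1) setup, for all states (i,j) ∈ S1 × S2 and (s,ℓ) ∈ S1 × S2 with P(Zprev = (s,ℓ)) > 0, the conditional probability of the next observation given the previous one satisfies P(Z = (i,j) | Zprev = (s,ℓ)) = π11·[(i,j)=(s,ℓ)] + π10·[i=s]·q2(j) + π01·q1(i)·[j=ℓ] + π00·q(i,j). -/
open MeasureTheory ProbabilityTheory ENNReal

/-- **Joint conditional probabilities of the BDAR(1) model.**
In the one-step BDAR(1) setup (random variables `Zprev`, `ε`, `α` mutually independent,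
`Z` built componentwise from `Zprev` and `ε` according to the random mechanism `α`),
for all states `(i,j)` and `(s,ℓ)` with `P(Zprev = (s,ℓ)) > 0`,
`P(Z = (i,j) | Zprev = (s,ℓ))
  = π11·[(i,j)=(s,ℓ)] + π10·[i=s]·q2(j) + π01·q1(i)·[j=ℓ] + π00·q(i,j)`. -/
theorem bdar1_joint_conditional_prob
    {Ω : Type*} [MeasurableSpace Ω] (P : Measure Ω) [IsProbabilityMeasure P]
    {S1 S2 : Type*} [Fintype S1] [Nonempty S1] [MeasurableSpace S1]
    [DiscreteMeasurableSpace S1] [DecidableEq S1]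
    [Fintype S2] [Nonempty S2] [MeasurableSpace S2]
    [DiscreteMeasurableSpace S2] [DecidableEq S2]
    (Zprev ε : Ω → S1 × S2) (α : Ω → Bool × Bool)
    (hZprevm : Measurable Zprev) (hεm : Measurable ε) (hαm : Measurable α)
    -- mutual independence of the triple (α, ε, Zprev)
    (hindep : ∀ (a : Bool × Bool) (e z : S1 × S2),
      P {ω | α ω = a ∧ ε ω = e ∧ Zprev ω = z}
        = P {ω | α ω = a} * P {ω | ε ω = e} * P {ω | Zprev ω = z})
    (Z : Ω → S1 × S2)
    (hZ : ∀ ω, Z ω = ((if (α ω).1 then (Zprev ω).1 else (ε ω).1),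
                      (if (α ω).2 then (Zprev ω).2 else (ε ω).2)))
    (i : S1) (j : S2) (s : S1) (ℓ : S2)
    (hpos : 0 < P {ω | Zprev ω = (s, ℓ)}) :
    P {ω | Z ω = (i, j) ∧ Zprev ω = (s, ℓ)} / P {ω | Zprev ω = (s, ℓ)}
      = P {ω | α ω = (true, true)} * (if (i, j) = (s, ℓ) then 1 else 0)
        + P {ω | α ω = (true, false)} * (if i = s then 1 else 0) * P {ω | (ε ω).2 = j}
        + P {ω | α ω = (false, true)} * P {ω | (ε ω).1 = i} * (if j = ℓ then 1 else 0)
        + P {ω | α ω = (false, false)} * P {ω | ε ω = (i, j)} := by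

  classical
  have hPzt : P {ω | Zprev ω = (s, ℓ)} ≠ ⊤ := (measure_lt_top P _).ne
  have hPz0 : P {ω | Zprev ω = (s, ℓ)} ≠ 0 := hpos.ne'
  -- measurability of Z
  have hZm : Measurable Z := by
    have hfe : Z = fun ω => ((if (α ω).1 then (Zprev ω).1 else (ε ω).1),
                      (if (α ω).2 then (Zprev ω).2 else (ε ω).2)) := funext hZ
    rw [hfe]
    apply Measurable.prod
    · exact Measurable.ite (hαm.fst (measurableSet_singleton true)) hZprevm.fst hεm.fst
    · exact Measurable.ite (hαm.snd (measurableSet_singleton true)) hZprevm.snd hεm.snd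
  -- measurability of pointwise events
  have hmA : ∀ p : Bool × Bool, MeasurableSet {ω | α ω = p ∧ Z ω = (i, j) ∧ Zprev ω = (s, ℓ)} := by
    intro p
    have h : {ω | α ω = p ∧ Z ω = (i, j) ∧ Zprev ω = (s, ℓ)}
        = α ⁻¹' {p} ∩ (Z ⁻¹' {(i, j)} ∩ Zprev ⁻¹' {(s, ℓ)}) := rfl
    rw [h]
    exact (hαm (measurableSet_singleton _)).inter
      ((hZm (measurableSet_singleton _)).inter (hZprevm (measurableSet_singleton _)))
  have hmT : ∀ (p : Bool × Bool) (e : S1 × S2),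
      MeasurableSet {ω | α ω = p ∧ ε ω = e ∧ Zprev ω = (s, ℓ)} := by
    intro p e
    have h : {ω | α ω = p ∧ ε ω = e ∧ Zprev ω = (s, ℓ)}
        = α ⁻¹' {p} ∩ (ε ⁻¹' {e} ∩ Zprev ⁻¹' {(s, ℓ)}) := rfl
    rw [h]
    exact (hαm (measurableSet_singleton _)).inter
      ((hεm (measurableSet_singleton _)).inter (hZprevm (measurableSet_singleton _)))
  -- extended independence for finsets of innovation values
  have hindepE : ∀ (a : Bool × Bool) (E : Finset (S1 × S2)),
      P {ω | α ω = a ∧ ε ω ∈ E ∧ Zprev ω = (s, ℓ)}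
        = P {ω | α ω = a} * P {ω | ε ω ∈ E} * P {ω | Zprev ω = (s, ℓ)} := by
    intro a E
    have h1 : {ω | α ω = a ∧ ε ω ∈ E ∧ Zprev ω = (s, ℓ)}
        = ⋃ e ∈ E, {ω | α ω = a ∧ ε ω = e ∧ Zprev ω = (s, ℓ)} := by
      ext ω
      simp only [Set.mem_setOf_eq, Set.mem_iUnion, exists_prop]
      constructor
      · rintro ⟨h1, h2, h3⟩; exact ⟨ε ω, h2, h1, rfl, h3⟩
      · rintro ⟨e, he, h1, h2, h3⟩; exact ⟨h1, h2 ▸ he, h3⟩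
    have h2 : {ω | ε ω ∈ E} = ⋃ e ∈ E, ε ⁻¹' {e} := by
      ext ω
      simp only [Set.mem_setOf_eq, Set.mem_iUnion, Set.mem_preimage,
        Set.mem_singleton_iff, exists_prop]
      constructor
      · intro h; exact ⟨ε ω, h, rfl⟩
      · rintro ⟨e, he, h⟩; exact h ▸ he
    have hd1 : (E : Set (S1 × S2)).PairwiseDisjoint
        (fun e => {ω | α ω = a ∧ ε ω = e ∧ Zprev ω = (s, ℓ)}) := by
      intro x hx y hy hxy
      rw [Function.onFun, Set.disjoint_left]
      rintro ω ⟨_, h2, _⟩ ⟨_, h2', _⟩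
      exact hxy (h2 ▸ h2')
    have hd2 : (E : Set (S1 × S2)).PairwiseDisjoint (fun e => ε ⁻¹' {e}) := by
      intro x hx y hy hxy
      rw [Function.onFun, Set.disjoint_left]
      rintro ω h h'
      simp only [Set.mem_preimage, Set.mem_singleton_iff] at h h'
      exact hxy (h ▸ h')
    rw [h1, h2, measure_biUnion_finset hd1 (fun e _ => hmT a e),
      measure_biUnion_finset hd2 (fun e _ => hεm (measurableSet_singleton e))]
    calc ∑ e ∈ E, P {ω | α ω = a ∧ ε ω = e ∧ Zprev ω = (s, ℓ)}
        = ∑ e ∈ E, P {ω | α ω = a} * P {ω | ε ω = e} * P {ω | Zprev ω = (s, ℓ)} :=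
          Finset.sum_congr rfl (fun e _ => hindep a e (s, ℓ))
      _ = P {ω | α ω = a} * (∑ e ∈ E, P (ε ⁻¹' {e})) * P {ω | Zprev ω = (s, ℓ)} := by
          rw [← Finset.sum_mul, Finset.mul_sum]
          rfl
  -- the four pieces
  have h_tt : P {ω | α ω = (true, true) ∧ Z ω = (i, j) ∧ Zprev ω = (s, ℓ)}
      = P {ω | α ω = (true, true)} * (if (i, j) = (s, ℓ) then 1 else 0)
        * P {ω | Zprev ω = (s, ℓ)} := by
    by_cases hc : (i, j) = (s, ℓ)
    · have hset : {ω | α ω = (true, true) ∧ Z ω = (i, j) ∧ Zprev ω = (s, ℓ)}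
          = {ω | α ω = (true, true) ∧ ε ω ∈ (Finset.univ : Finset (S1 × S2))
              ∧ Zprev ω = (s, ℓ)} := by
        ext ω
        simp only [Set.mem_setOf_eq, Finset.mem_univ, true_and]
        constructor
        · rintro ⟨h1, _, h3⟩; exact ⟨h1, h3⟩
        · rintro ⟨h1, h3⟩
          refine ⟨h1, ?_, h3⟩
          rw [hZ ω, h1, h3]
          simpa using hc.symm
      have huniv : {ω | ε ω ∈ (Finset.univ : Finset (S1 × S2))} = Set.univ := by
        ext ω; simp
      rw [hset, hindepE, huniv, measure_univ, if_pos hc]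
    · have hset : {ω | α ω = (true, true) ∧ Z ω = (i, j) ∧ Zprev ω = (s, ℓ)} = ∅ := by
        ext ω
        simp only [Set.mem_setOf_eq, Set.mem_empty_iff_false, iff_false]
        rintro ⟨h1, h2, h3⟩
        apply hc
        have h4 := hZ ω
        rw [h2, h1, h3] at h4
        simpa using h4
      rw [hset, measure_empty, if_neg hc]
      ring
  have h_tf : P {ω | α ω = (true, false) ∧ Z ω = (i, j) ∧ Zprev ω = (s, ℓ)}
      = P {ω | α ω = (true, false)} * (if i = s then 1 else 0) * P {ω | (ε ω).2 = j}
        * P {ω | Zprev ω = (s, ℓ)} := by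
    by_cases hc : i = s
    · have hset : {ω | α ω = (true, false) ∧ Z ω = (i, j) ∧ Zprev ω = (s, ℓ)}
          = {ω | α ω = (true, false) ∧ ε ω ∈ Finset.univ.filter (fun e : S1 × S2 => e.2 = j)
              ∧ Zprev ω = (s, ℓ)} := by
        ext ω
        simp only [Set.mem_setOf_eq, Finset.mem_filter, Finset.mem_univ, true_and]
        constructor
        · rintro ⟨h1, h2, h3⟩
          refine ⟨h1, ?_, h3⟩
          have h4 := hZ ω
          rw [h2, h1, h3] at h4
          simp at h4
          exact h4.2.symm
        · rintro ⟨h1, h2, h3⟩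
          refine ⟨h1, ?_, h3⟩
          rw [hZ ω, h1, h3, h2, hc]
          simp
      have hE : {ω | ε ω ∈ Finset.univ.filter (fun e : S1 × S2 => e.2 = j)}
          = {ω | (ε ω).2 = j} := by
        ext ω; simp
      rw [hset, hindepE, hE, if_pos hc, mul_one]
    · have hset : {ω | α ω = (true, false) ∧ Z ω = (i, j) ∧ Zprev ω = (s, ℓ)} = ∅ := by
        ext ω
        simp only [Set.mem_setOf_eq, Set.mem_empty_iff_false, iff_false]
        rintro ⟨h1, h2, h3⟩
        apply hc
        have h4 := hZ ω
        rw [h2, h1, h3] at h4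
        simp at h4
        exact h4.1
      rw [hset, measure_empty, if_neg hc]
      ring
  have h_ft : P {ω | α ω = (false, true) ∧ Z ω = (i, j) ∧ Zprev ω = (s, ℓ)}
      = P {ω | α ω = (false, true)} * P {ω | (ε ω).1 = i} * (if j = ℓ then 1 else 0)
        * P {ω | Zprev ω = (s, ℓ)} := by
    by_cases hc : j = ℓ
    · have hset : {ω | α ω = (false, true) ∧ Z ω = (i, j) ∧ Zprev ω = (s, ℓ)}
          = {ω | α ω = (false, true) ∧ ε ω ∈ Finset.univ.filter (fun e : S1 × S2 => e.1 = i)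
              ∧ Zprev ω = (s, ℓ)} := by
        ext ω
        simp only [Set.mem_setOf_eq, Finset.mem_filter, Finset.mem_univ, true_and]
        constructor
        · rintro ⟨h1, h2, h3⟩
          refine ⟨h1, ?_, h3⟩
          have h4 := hZ ω
          rw [h2, h1, h3] at h4
          simp at h4
          exact h4.1.symm
        · rintro ⟨h1, h2, h3⟩
          refine ⟨h1, ?_, h3⟩
          rw [hZ ω, h1, h3, h2, hc]
          simp
      have hE : {ω | ε ω ∈ Finset.univ.filter (fun e : S1 × S2 => e.1 = i)}
          = {ω | (ε ω).1 = i} := by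
        ext ω; simp
      rw [hset, hindepE, hE, if_pos hc, mul_one]
    · have hset : {ω | α ω = (false, true) ∧ Z ω = (i, j) ∧ Zprev ω = (s, ℓ)} = ∅ := by
        ext ω
        simp only [Set.mem_setOf_eq, Set.mem_empty_iff_false, iff_false]
        rintro ⟨h1, h2, h3⟩
        apply hc
        have h4 := hZ ω
        rw [h2, h1, h3] at h4
        simp at h4
        exact h4.2
      rw [hset, measure_empty, if_neg hc]
      ring
  have h_ff : P {ω | α ω = (false, false) ∧ Z ω = (i, j) ∧ Zprev ω = (s, ℓ)}
      = P {ω | α ω = (false, false)} * P {ω | ε ω = (i, j)}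
        * P {ω | Zprev ω = (s, ℓ)} := by
    have hset : {ω | α ω = (false, false) ∧ Z ω = (i, j) ∧ Zprev ω = (s, ℓ)}
        = {ω | α ω = (false, false) ∧ ε ω ∈ ({(i, j)} : Finset (S1 × S2))
            ∧ Zprev ω = (s, ℓ)} := by
      ext ω
      simp only [Set.mem_setOf_eq, Finset.mem_singleton]
      constructor
      · rintro ⟨h1, h2, h3⟩
        refine ⟨h1, ?_, h3⟩
        have h4 := hZ ω
        rw [h2, h1] at h4
        simp at h4
        exact h4.symm
      · rintro ⟨h1, h2, h3⟩
        refine ⟨h1, ?_, h3⟩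
        rw [hZ ω, h1, h2]
        simp
    have hE : {ω | ε ω ∈ ({(i, j)} : Finset (S1 × S2))} = {ω | ε ω = (i, j)} := by
      ext ω; simp
    rw [hset, hindepE, hE]
  -- split the main event by the value of α
  have hsplit : {ω | Z ω = (i, j) ∧ Zprev ω = (s, ℓ)}
      = {ω | α ω = (true, true) ∧ Z ω = (i, j) ∧ Zprev ω = (s, ℓ)}
        ∪ {ω | α ω = (true, false) ∧ Z ω = (i, j) ∧ Zprev ω = (s, ℓ)}
        ∪ {ω | α ω = (false, true) ∧ Z ω = (i, j) ∧ Zprev ω = (s, ℓ)}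
        ∪ {ω | α ω = (false, false) ∧ Z ω = (i, j) ∧ Zprev ω = (s, ℓ)} := by
    ext ω
    simp only [Set.mem_setOf_eq, Set.mem_union]
    constructor
    · intro h
      rcases hab : α ω with ⟨a, b⟩
      cases a <;> cases b <;> tauto
    · intro h
      tauto
  have hdisj : ∀ p q : Bool × Bool, p ≠ q →
      Disjoint {ω | α ω = p ∧ Z ω = (i, j) ∧ Zprev ω = (s, ℓ)}
        {ω | α ω = q ∧ Z ω = (i, j) ∧ Zprev ω = (s, ℓ)} := by
    intro p q hpq
    rw [Set.disjoint_left]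
    rintro ω ⟨h1, _⟩ ⟨h1', _⟩
    exact hpq (h1 ▸ h1')
  have hsum : P {ω | Z ω = (i, j) ∧ Zprev ω = (s, ℓ)}
      = (P {ω | α ω = (true, true)} * (if (i, j) = (s, ℓ) then 1 else 0)
        + P {ω | α ω = (true, false)} * (if i = s then 1 else 0) * P {ω | (ε ω).2 = j}
        + P {ω | α ω = (false, true)} * P {ω | (ε ω).1 = i} * (if j = ℓ then 1 else 0)
        + P {ω | α ω = (false, false)} * P {ω | ε ω = (i, j)})
        * P {ω | Zprev ω = (s, ℓ)} := by
    rw [hsplit]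
    rw [measure_union (by
        refine Disjoint.union_left (Disjoint.union_left ?_ ?_) ?_ <;>
          exact hdisj _ _ (by simp)) (hmA _)]
    rw [measure_union (by
        refine Disjoint.union_left ?_ ?_ <;> exact hdisj _ _ (by simp)) (hmA _)]
    rw [measure_union (hdisj _ _ (by simp)) (hmA _)]
    rw [h_tt, h_tf, h_ft, h_ff]
    ring
  rw [hsum, mul_div_assoc, ENNReal.div_self hPz0 hPzt, mul_one]
end

section
/- In the one-step BDAR(1) setup, assume φ1 < 1 and φ2 < 1, and assume stationarity in the sense that Z and Zprev are identically distributed, i.e. P(Z = (i,j)) = P(Zprev = (i,j)) for all (i,j) ∈ S1 × S2. Then 1 − π11 > 0 and for all (i,j) ∈ S1 × S2, P(Z = (i,j)) = ((π10 + π01)·q1(i)·q2(j) + π00·q(i,j)) / (1 − π11). -/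
open MeasureTheory ProbabilityTheory ENNReal


lemma bdar_fiber_sum {Ω : Type*} [MeasurableSpace Ω] (P : Measure Ω)
    {T : Type*} [Fintype T] [MeasurableSpace T] [MeasurableSingletonClass T]
    (f : Ω → T) (hf : Measurable f) (s : Set Ω) (hs : MeasurableSet s) :
    P s = ∑ t : T, P (s ∩ {ω | f ω = t}) := by
  have hrw : s = ⋃ t ∈ (Finset.univ : Finset T), s ∩ {ω | f ω = t} := by
    ext ω; simp
  have hd : Set.PairwiseDisjoint ((Finset.univ : Finset T) : Set T) (fun t => s ∩ {ω | f ω = t}) := by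
    intro a _ b _ hab
    refine Set.disjoint_left.2 fun ω h1 h2 => hab ?_
    rw [← h1.2, h2.2]
  have hm : ∀ t ∈ (Finset.univ : Finset T), MeasurableSet (s ∩ {ω | f ω = t}) :=
    fun t _ => hs.inter (hf (measurableSet_singleton t))
  calc P s = P (⋃ t ∈ (Finset.univ : Finset T), s ∩ {ω | f ω = t}) := by rw [← hrw]
    _ = ∑ t : T, P (s ∩ {ω | f ω = t}) := measure_biUnion_finset hd hm

lemma bdar_mem_sum {Ω : Type*} [MeasurableSpace Ω] (P : Measure Ω)
    {T : Type*} [MeasurableSpace T] [MeasurableSingletonClass T]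
    (f : Ω → T) (hf : Measurable f) (A : Finset T) :
    P {ω | f ω ∈ A} = ∑ t ∈ A, P {ω | f ω = t} := by
  have hrw : {ω | f ω ∈ A} = ⋃ t ∈ A, {ω | f ω = t} := by
    ext ω; simp
  have hd : Set.PairwiseDisjoint (A : Set T) (fun t => {ω | f ω = t}) := by
    intro a _ b _ hab
    refine Set.disjoint_left.2 fun ω h1 h2 => hab ?_
    rw [← h1, h2]
  have hm : ∀ t ∈ A, MeasurableSet {ω | f ω = t} :=
    fun t _ => hf (measurableSet_singleton t)
  rw [hrw]; exact measure_biUnion_finset hd hm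

lemma bdar_indep_finsets {Ω S1 S2 : Type*} [MeasurableSpace Ω] (P : Measure Ω)
    [Fintype S1] [MeasurableSpace S1] [MeasurableSingletonClass S1]
    [Fintype S2] [MeasurableSpace S2] [MeasurableSingletonClass S2]
    (Zprev ε : Ω → S1 × S2) (α : Ω → Bool × Bool)
    (hZprevm : Measurable Zprev) (hεm : Measurable ε) (hαm : Measurable α)
    (hindep : ∀ (a : Bool × Bool) (e z : S1 × S2),
      P {ω | α ω = a ∧ ε ω = e ∧ Zprev ω = z}
        = P {ω | α ω = a} * P {ω | ε ω = e} * P {ω | Zprev ω = z})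
    (a : Bool × Bool) (A B : Finset (S1 × S2)) :
    P {ω | α ω = a ∧ ε ω ∈ A ∧ Zprev ω ∈ B}
      = P {ω | α ω = a} * P {ω | ε ω ∈ A} * P {ω | Zprev ω ∈ B} := by
  have hrw : {ω | α ω = a ∧ ε ω ∈ A ∧ Zprev ω ∈ B}
      = ⋃ p ∈ A ×ˢ B, {ω | α ω = a ∧ ε ω = p.1 ∧ Zprev ω = p.2} := by
    ext ω
    simp only [Set.mem_setOf_eq, Set.mem_iUnion, Finset.mem_product]
    constructor
    · rintro ⟨ha, he, hz⟩
      exact ⟨(ε ω, Zprev ω), ⟨he, hz⟩, ha, rfl, rfl⟩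
    · rintro ⟨p, ⟨hpA, hpB⟩, ha, he, hz⟩
      exact ⟨ha, he ▸ hpA, hz ▸ hpB⟩
  have hd : Set.PairwiseDisjoint ((A ×ˢ B : Finset _) : Set ((S1 × S2) × (S1 × S2)))
      (fun p : (S1 × S2) × (S1 × S2) => {ω | α ω = a ∧ ε ω = p.1 ∧ Zprev ω = p.2}) := by
    intro p _ q _ hpq
    refine Set.disjoint_left.2 fun ω h1 h2 => hpq ?_
    exact Prod.ext (h1.2.1 ▸ h2.2.1) (h1.2.2 ▸ h2.2.2)
  have hm : ∀ p ∈ A ×ˢ B,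
      MeasurableSet {ω | α ω = a ∧ ε ω = p.1 ∧ Zprev ω = p.2} :=
    fun p _ => (hαm (measurableSet_singleton a)).inter
      ((hεm (measurableSet_singleton p.1)).inter (hZprevm (measurableSet_singleton p.2)))
  rw [hrw, measure_biUnion_finset hd hm, bdar_mem_sum P ε hεm A,
    bdar_mem_sum P Zprev hZprevm B, Finset.sum_product]
  simp only [Finset.mul_sum, Finset.sum_mul]
  rw [Finset.sum_comm]
  refine Finset.sum_congr rfl fun y _ => Finset.sum_congr rfl fun x _ => ?_
  rw [hindep a x y]

/-- **Stationary joint distribution of the BDAR(1) model.**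
In the one-step BDAR(1) setup, if `φ1 < 1`, `φ2 < 1` and `Z` is distributed as `Zprev`
(stationarity), then `1 - π11 > 0` and for all `(i,j)`,
`P(Z = (i,j)) = ((π10 + π01)·q1(i)·q2(j) + π00·q(i,j)) / (1 - π11)`. -/
theorem bdar1_stationary_joint_distribution
    {Ω : Type*} [MeasurableSpace Ω] (P : Measure Ω) [IsProbabilityMeasure P]
    {S1 S2 : Type*} [Fintype S1] [Nonempty S1] [MeasurableSpace S1]
    [DiscreteMeasurableSpace S1]
    [Fintype S2] [Nonempty S2] [MeasurableSpace S2]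
    [DiscreteMeasurableSpace S2]
    (Zprev ε : Ω → S1 × S2) (α : Ω → Bool × Bool)
    (hZprevm : Measurable Zprev) (hεm : Measurable ε) (hαm : Measurable α)
    -- mutual independence of the triple (α, ε, Zprev)
    (hindep : ∀ (a : Bool × Bool) (e z : S1 × S2),
      P {ω | α ω = a ∧ ε ω = e ∧ Zprev ω = z}
        = P {ω | α ω = a} * P {ω | ε ω = e} * P {ω | Zprev ω = z})
    (Z : Ω → S1 × S2)
    (hZ : ∀ ω, Z ω = ((if (α ω).1 then (Zprev ω).1 else (ε ω).1),
                      (if (α ω).2 then (Zprev ω).2 else (ε ω).2)))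
    (hφ1 : P {ω | (α ω).1 = true} < 1)
    (hφ2 : P {ω | (α ω).2 = true} < 1)
    -- stationarity: Z and Zprev are identically distributed
    (hstat : ∀ (i : S1) (j : S2), P {ω | Z ω = (i, j)} = P {ω | Zprev ω = (i, j)}) :
    0 < 1 - P {ω | α ω = (true, true)} ∧
    ∀ (i : S1) (j : S2),
      P {ω | Z ω = (i, j)}
        = ((P {ω | α ω = (true, false)} + P {ω | α ω = (false, true)})
              * P {ω | (ε ω).1 = i} * P {ω | (ε ω).2 = j}
            + P {ω | α ω = (false, false)} * P {ω | ε ω = (i, j)})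
          / (1 - P {ω | α ω = (true, true)}) := by
    classical
  have hne : ∀ s : Set Ω, P s ≠ ∞ := fun s => measure_ne_top P s
  have hZm : Measurable Z := by
    have : Z = fun ω => ((if (α ω).1 then (Zprev ω).1 else (ε ω).1),
                      (if (α ω).2 then (Zprev ω).2 else (ε ω).2)) := funext hZ
    rw [this]
    exact (Measurable.ite (hαm.fst (measurableSet_singleton true)) hZprevm.fst hεm.fst).prod
      (Measurable.ite (hαm.snd (measurableSet_singleton true)) hZprevm.snd hεm.snd)
  have expand : ∀ (s : Set Ω), MeasurableSet s →
      P s = P (s ∩ {ω | α ω = (true, true)}) + P (s ∩ {ω | α ω = (true, false)})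
          + P (s ∩ {ω | α ω = (false, true)}) + P (s ∩ {ω | α ω = (false, false)}) := by
    intro s hs
    rw [bdar_fiber_sum P α hαm s hs, Fintype.sum_prod_type]
    simp only [Fintype.sum_bool]
    ring
  have htot : P {ω | α ω = (true,true)} + P {ω | α ω = (true,false)}
      + P {ω | α ω = (false,true)} + P {ω | α ω = (false,false)} = 1 := by
    have h := expand Set.univ MeasurableSet.univ
    simp only [Set.univ_inter, measure_univ] at h
    exact h.symm
  -- φ decompositions
  have hφ1eq : P {ω | (α ω).1 = true}
      = P {ω | α ω = (true,true)} + P {ω | α ω = (true,false)} := by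
    have hms1 : MeasurableSet {ω | (α ω).1 = true} := hαm.fst (measurableSet_singleton true)
    rw [expand _ hms1]
    have e1 : ∀ b, {ω | (α ω).1 = true} ∩ {ω | α ω = (true,b)} = {ω | α ω = (true,b)} := by
      intro b; ext ω
      simp only [Set.mem_inter_iff, Set.mem_setOf_eq, and_iff_right_iff_imp]
      intro h; rw [h]
    have e2 : ∀ b, {ω | (α ω).1 = true} ∩ {ω | α ω = (false,b)} = (∅ : Set Ω) := by
      intro b; ext ω
      simp only [Set.mem_inter_iff, Set.mem_setOf_eq, Set.mem_empty_iff_false, iff_false,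
        not_and]
      intro h1 h2; rw [h2] at h1; simp at h1
    rw [e1, e1, e2, e2, measure_empty, add_zero, add_zero]
  have hφ2eq : P {ω | (α ω).2 = true}
      = P {ω | α ω = (true,true)} + P {ω | α ω = (false,true)} := by
    have hms2 : MeasurableSet {ω | (α ω).2 = true} := hαm.snd (measurableSet_singleton true)
    rw [expand _ hms2]
    have e1 : ∀ b, {ω | (α ω).2 = true} ∩ {ω | α ω = (b,true)} = {ω | α ω = (b,true)} := by
      intro b; ext ω
      simp only [Set.mem_inter_iff, Set.mem_setOf_eq, and_iff_right_iff_imp]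
      intro h; rw [h]
    have e2 : ∀ b, {ω | (α ω).2 = true} ∩ {ω | α ω = (b,false)} = (∅ : Set Ω) := by
      intro b; ext ω
      simp only [Set.mem_inter_iff, Set.mem_setOf_eq, Set.mem_empty_iff_false, iff_false,
        not_and]
      intro h1 h2; rw [h2] at h1; simp at h1
    rw [e1, e2, e1, e2, measure_empty, add_zero, add_zero]
  -- helper finsets
  have hmemuniv : ∀ (f : Ω → S1 × S2),
      P {ω | f ω ∈ (Finset.univ : Finset (S1 × S2))} = 1 := by
    intro f
    have : {ω | f ω ∈ (Finset.univ : Finset (S1 × S2))} = Set.univ := by ext ω; simp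
    rw [this, measure_univ]
  have hmemsingle : ∀ (f : Ω → S1 × S2) (z : S1 × S2),
      P {ω | f ω ∈ ({z} : Finset (S1 × S2))} = P {ω | f ω = z} := by
    intro f z
    have : {ω | f ω ∈ ({z} : Finset (S1 × S2))} = {ω | f ω = z} := by ext ω; simp
    rw [this]
  have hmemF1 : ∀ (f : Ω → S1 × S2) (i : S1),
      P {ω | f ω ∈ Finset.univ.filter (fun e : S1 × S2 => e.1 = i)}
        = P {ω | (f ω).1 = i} := by
    intro f i
    have : {ω | f ω ∈ Finset.univ.filter (fun e : S1 × S2 => e.1 = i)}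
        = {ω | (f ω).1 = i} := by ext ω; simp
    rw [this]
  have hmemF2 : ∀ (f : Ω → S1 × S2) (j : S2),
      P {ω | f ω ∈ Finset.univ.filter (fun e : S1 × S2 => e.2 = j)}
        = P {ω | (f ω).2 = j} := by
    intro f j
    have : {ω | f ω ∈ Finset.univ.filter (fun e : S1 × S2 => e.2 = j)}
        = {ω | (f ω).2 = j} := by ext ω; simp
    rw [this]
  have indep := bdar_indep_finsets P Zprev ε α hZprevm hεm hαm hindep
  -- stationarity of marginals of Z
  have hstat1 : ∀ i, P {ω | (Z ω).1 = i} = P {ω | (Zprev ω).1 = i} := by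
    intro i
    have hmsZ : MeasurableSet {ω | (Z ω).1 = i} := hZm.fst (measurableSet_singleton i)
    have hmsZp : MeasurableSet {ω | (Zprev ω).1 = i} := hZprevm.fst (measurableSet_singleton i)
    rw [bdar_fiber_sum P (fun ω => (Z ω).2) hZm.snd _ hmsZ,
        bdar_fiber_sum P (fun ω => (Zprev ω).2) hZprevm.snd _ hmsZp]
    refine Finset.sum_congr rfl fun j _ => ?_
    have e1 : {ω | (Z ω).1 = i} ∩ {ω | (Z ω).2 = j} = {ω | Z ω = (i,j)} := by
      ext ω; simp only [Set.mem_inter_iff, Set.mem_setOf_eq, Prod.ext_iff]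
    have e2 : {ω | (Zprev ω).1 = i} ∩ {ω | (Zprev ω).2 = j} = {ω | Zprev ω = (i,j)} := by
      ext ω; simp only [Set.mem_inter_iff, Set.mem_setOf_eq, Prod.ext_iff]
    rw [e1, e2, hstat i j]
  have hstat2 : ∀ j, P {ω | (Z ω).2 = j} = P {ω | (Zprev ω).2 = j} := by
    intro j
    have hmsZ : MeasurableSet {ω | (Z ω).2 = j} := hZm.snd (measurableSet_singleton j)
    have hmsZp : MeasurableSet {ω | (Zprev ω).2 = j} := hZprevm.snd (measurableSet_singleton j)
    rw [bdar_fiber_sum P (fun ω => (Z ω).1) hZm.fst _ hmsZ,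
        bdar_fiber_sum P (fun ω => (Zprev ω).1) hZprevm.fst _ hmsZp]
    refine Finset.sum_congr rfl fun i _ => ?_
    have e1 : {ω | (Z ω).2 = j} ∩ {ω | (Z ω).1 = i} = {ω | Z ω = (i,j)} := by
      ext ω; simp only [Set.mem_inter_iff, Set.mem_setOf_eq, Prod.ext_iff]; tauto
    have e2 : {ω | (Zprev ω).2 = j} ∩ {ω | (Zprev ω).1 = i} = {ω | Zprev ω = (i,j)} := by
      ext ω; simp only [Set.mem_inter_iff, Set.mem_setOf_eq, Prod.ext_iff]; tauto
    rw [e1, e2, hstat i j]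
  -- marginal equation: first component
  have hmarg1 : ∀ i, P {ω | (Zprev ω).1 = i}
      = (P {ω | α ω = (true,true)} + P {ω | α ω = (true,false)}) * P {ω | (Zprev ω).1 = i}
      + (P {ω | α ω = (false,true)} + P {ω | α ω = (false,false)}) * P {ω | (ε ω).1 = i} := by
    intro i
    have hms : MeasurableSet {ω | (Z ω).1 = i} := hZm.fst (measurableSet_singleton i)
    have key := expand _ hms
    have et : ∀ b, {ω | (Z ω).1 = i} ∩ {ω | α ω = (true,b)}
        = {ω | α ω = (true,b) ∧ ε ω ∈ (Finset.univ : Finset (S1 × S2))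
            ∧ Zprev ω ∈ Finset.univ.filter (fun e : S1 × S2 => e.1 = i)} := by
      intro b; ext ω
      simp only [Set.mem_inter_iff, Set.mem_setOf_eq, Finset.mem_univ, true_and,
        Finset.mem_filter, hZ ω]
      constructor
      · rintro ⟨h1, ha⟩
        rw [ha] at h1; simp only [if_true] at h1
        exact ⟨ha, h1⟩
      · rintro ⟨ha, h1⟩
        refine ⟨?_, ha⟩
        rw [ha]; simpa using h1
    have ef : ∀ b, {ω | (Z ω).1 = i} ∩ {ω | α ω = (false,b)}
        = {ω | α ω = (false,b) ∧ ε ω ∈ Finset.univ.filter (fun e : S1 × S2 => e.1 = i)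
            ∧ Zprev ω ∈ (Finset.univ : Finset (S1 × S2))} := by
      intro b; ext ω
      simp only [Set.mem_inter_iff, Set.mem_setOf_eq, Finset.mem_univ, and_true,
        Finset.mem_filter, true_and, hZ ω]
      constructor
      · rintro ⟨h1, ha⟩
        rw [ha] at h1; simp only [if_false] at h1
        exact ⟨ha, h1⟩
      · rintro ⟨ha, h1⟩
        refine ⟨?_, ha⟩
        rw [ha]; simpa using h1
    rw [et, et, ef, ef, indep, indep, indep, indep] at key
    simp only [hmemuniv, hmemF1] at key
    rw [hstat1 i] at key
    exact key.trans (by ring)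
  have hmarg2 : ∀ j, P {ω | (Zprev ω).2 = j}
      = (P {ω | α ω = (true,true)} + P {ω | α ω = (false,true)}) * P {ω | (Zprev ω).2 = j}
      + (P {ω | α ω = (true,false)} + P {ω | α ω = (false,false)}) * P {ω | (ε ω).2 = j} := by
    intro j
    have hms : MeasurableSet {ω | (Z ω).2 = j} := hZm.snd (measurableSet_singleton j)
    have key := expand _ hms
    have et : ∀ b, {ω | (Z ω).2 = j} ∩ {ω | α ω = (b,true)}
        = {ω | α ω = (b,true) ∧ ε ω ∈ (Finset.univ : Finset (S1 × S2))
            ∧ Zprev ω ∈ Finset.univ.filter (fun e : S1 × S2 => e.2 = j)} := by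
      intro b; ext ω
      simp only [Set.mem_inter_iff, Set.mem_setOf_eq, Finset.mem_univ, true_and,
        Finset.mem_filter, hZ ω]
      constructor
      · rintro ⟨h1, ha⟩
        rw [ha] at h1; simp only [if_true] at h1
        exact ⟨ha, h1⟩
      · rintro ⟨ha, h1⟩
        refine ⟨?_, ha⟩
        rw [ha]; simpa using h1
    have ef : ∀ b, {ω | (Z ω).2 = j} ∩ {ω | α ω = (b,false)}
        = {ω | α ω = (b,false) ∧ ε ω ∈ Finset.univ.filter (fun e : S1 × S2 => e.2 = j)
            ∧ Zprev ω ∈ (Finset.univ : Finset (S1 × S2))} := by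
      intro b; ext ω
      simp only [Set.mem_inter_iff, Set.mem_setOf_eq, Finset.mem_univ, and_true,
        Finset.mem_filter, true_and, hZ ω]
      constructor
      · rintro ⟨h1, ha⟩
        rw [ha] at h1; simp only [if_false] at h1
        exact ⟨ha, h1⟩
      · rintro ⟨ha, h1⟩
        refine ⟨?_, ha⟩
        rw [ha]; simpa using h1
    rw [et, ef, et, ef, indep, indep, indep, indep] at key
    simp only [hmemuniv, hmemF2] at key
    rw [hstat2 j] at key
    exact key.trans (by ring)
  -- cancellation helper
  have cancel : ∀ (c x y : ℝ≥0∞), c ≠ ∞ → c < 1 → x ≠ ∞ → y ≠ ∞ →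
      x = c * x + (1 - c) * y → x = y := by
    intro c x y hcne hclt hxne hyne hxy
    have h0 : (1 : ℝ≥0∞) - c ≠ 0 := (tsub_pos_of_lt hclt).ne'
    have hfin : (1 : ℝ≥0∞) - c ≠ ∞ := (tsub_le_self.trans_lt ENNReal.one_lt_top).ne
    have hsub : x - c * x = (1 - c) * y :=
      ENNReal.sub_eq_of_eq_add (ENNReal.mul_ne_top hcne hxne)
        (hxy.trans (add_comm _ _))
    have hmul : (1 - c) * x = (1 - c) * y := by
      rw [ENNReal.sub_mul (fun _ _ => hxne), one_mul, hsub]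
    exact (ENNReal.mul_right_inj h0 hfin).1 hmul
  have hp1q1 : ∀ i, P {ω | (Zprev ω).1 = i} = P {ω | (ε ω).1 = i} := by
    intro i
    have hc : P {ω | α ω = (true,true)} + P {ω | α ω = (true,false)} < 1 := by
      rw [← hφ1eq]; exact hφ1
    have hrest : P {ω | α ω = (false,true)} + P {ω | α ω = (false,false)}
        = 1 - (P {ω | α ω = (true,true)} + P {ω | α ω = (true,false)}) := by
      apply ENNReal.eq_sub_of_add_eq (ENNReal.add_ne_top.2 ⟨hne _, hne _⟩)
      rw [← htot]; ring
    refine cancel _ _ _ (ENNReal.add_ne_top.2 ⟨hne _, hne _⟩) hc (hne _) (hne _) ?_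
    rw [← hrest]; exact hmarg1 i
  have hp2q2 : ∀ j, P {ω | (Zprev ω).2 = j} = P {ω | (ε ω).2 = j} := by
    intro j
    have hc : P {ω | α ω = (true,true)} + P {ω | α ω = (false,true)} < 1 := by
      rw [← hφ2eq]; exact hφ2
    have hrest : P {ω | α ω = (true,false)} + P {ω | α ω = (false,false)}
        = 1 - (P {ω | α ω = (true,true)} + P {ω | α ω = (false,true)}) := by
      apply ENNReal.eq_sub_of_add_eq (ENNReal.add_ne_top.2 ⟨hne _, hne _⟩)
      rw [← htot]; ring
    refine cancel _ _ _ (ENNReal.add_ne_top.2 ⟨hne _, hne _⟩) hc (hne _) (hne _) ?_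
    rw [← hrest]; exact hmarg2 j
  -- π11 < 1
  have hπ11lt : P {ω | α ω = (true,true)} < 1 := by
    refine lt_of_le_of_lt (measure_mono ?_) hφ1
    intro ω h
    rw [Set.mem_setOf_eq] at h ⊢
    rw [h]
  have h0 : (1 : ℝ≥0∞) - P {ω | α ω = (true,true)} ≠ 0 := (tsub_pos_of_lt hπ11lt).ne'
  have hfin : (1 : ℝ≥0∞) - P {ω | α ω = (true,true)} ≠ ∞ :=
    (tsub_le_self.trans_lt ENNReal.one_lt_top).ne
  refine ⟨tsub_pos_of_lt hπ11lt, fun i j => ?_⟩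
  -- the joint equation
  have hms : MeasurableSet {ω | Z ω = (i,j)} := hZm (measurableSet_singleton (i,j))
  have key := expand _ hms
  have e11 : {ω | Z ω = (i,j)} ∩ {ω | α ω = (true,true)}
      = {ω | α ω = (true,true) ∧ ε ω ∈ (Finset.univ : Finset (S1 × S2))
          ∧ Zprev ω ∈ ({(i,j)} : Finset (S1 × S2))} := by
    ext ω
    simp only [Set.mem_inter_iff, Set.mem_setOf_eq, Finset.mem_univ, true_and,
      Finset.mem_singleton, hZ ω, Prod.mk.injEq]
    constructor
    · rintro ⟨⟨h1, h2⟩, ha⟩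
      rw [ha] at h1 h2; simp only [if_true] at h1 h2
      exact ⟨ha, Prod.ext h1 h2⟩
    · rintro ⟨ha, hz⟩
      refine ⟨⟨?_, ?_⟩, ha⟩ <;> rw [ha] <;> simp [hz]
  have e10 : {ω | Z ω = (i,j)} ∩ {ω | α ω = (true,false)}
      = {ω | α ω = (true,false) ∧ ε ω ∈ Finset.univ.filter (fun e : S1 × S2 => e.2 = j)
          ∧ Zprev ω ∈ Finset.univ.filter (fun e : S1 × S2 => e.1 = i)} := by
    ext ω
    simp only [Set.mem_inter_iff, Set.mem_setOf_eq, Finset.mem_univ, true_and,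
      Finset.mem_filter, hZ ω, Prod.mk.injEq]
    constructor
    · rintro ⟨⟨h1, h2⟩, ha⟩
      rw [ha] at h1 h2; simp only [if_true, if_false] at h1 h2
      exact ⟨ha, h2, h1⟩
    · rintro ⟨ha, h2, h1⟩
      refine ⟨⟨?_, ?_⟩, ha⟩ <;> rw [ha] <;> simpa
  have e01 : {ω | Z ω = (i,j)} ∩ {ω | α ω = (false,true)}
      = {ω | α ω = (false,true) ∧ ε ω ∈ Finset.univ.filter (fun e : S1 × S2 => e.1 = i)
          ∧ Zprev ω ∈ Finset.univ.filter (fun e : S1 × S2 => e.2 = j)} := by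
    ext ω
    simp only [Set.mem_inter_iff, Set.mem_setOf_eq, Finset.mem_univ, true_and,
      Finset.mem_filter, hZ ω, Prod.mk.injEq]
    constructor
    · rintro ⟨⟨h1, h2⟩, ha⟩
      rw [ha] at h1 h2; simp only [if_true, if_false] at h1 h2
      exact ⟨ha, h1, h2⟩
    · rintro ⟨ha, h1, h2⟩
      refine ⟨⟨?_, ?_⟩, ha⟩ <;> rw [ha] <;> simpa
  have e00 : {ω | Z ω = (i,j)} ∩ {ω | α ω = (false,false)}
      = {ω | α ω = (false,false) ∧ ε ω ∈ ({(i,j)} : Finset (S1 × S2))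
          ∧ Zprev ω ∈ (Finset.univ : Finset (S1 × S2))} := by
    ext ω
    simp only [Set.mem_inter_iff, Set.mem_setOf_eq, Finset.mem_univ, and_true, true_and,
      Finset.mem_singleton, hZ ω, Prod.mk.injEq]
    constructor
    · rintro ⟨⟨h1, h2⟩, ha⟩
      rw [ha] at h1 h2; simp only [if_false] at h1 h2
      exact ⟨ha, Prod.ext h1 h2⟩
    · rintro ⟨ha, hz⟩
      refine ⟨⟨?_, ?_⟩, ha⟩ <;> rw [ha] <;> simp [hz]
  rw [e11, e10, e01, e00, indep, indep, indep, indep] at key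
  simp only [hmemuniv, hmemsingle, hmemF1, hmemF2] at key
  rw [← hstat i j, hp1q1 i, hp2q2 j] at key
  refine (ENNReal.eq_div_iff h0 hfin).mpr ?_
  have hx : P {ω | Z ω = (i,j)}
      = ((P {ω | α ω = (true, false)} + P {ω | α ω = (false, true)})
            * P {ω | (ε ω).1 = i} * P {ω | (ε ω).2 = j}
          + P {ω | α ω = (false, false)} * P {ω | ε ω = (i, j)})
        + P {ω | α ω = (true,true)} * P {ω | Z ω = (i,j)} :=
    key.trans (by ring)
  have hsub : P {ω | Z ω = (i,j)} - P {ω | α ω = (true,true)} * P {ω | Z ω = (i,j)}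
      = (P {ω | α ω = (true, false)} + P {ω | α ω = (false, true)})
          * P {ω | (ε ω).1 = i} * P {ω | (ε ω).2 = j}
        + P {ω | α ω = (false, false)} * P {ω | ε ω = (i, j)} :=
    ENNReal.sub_eq_of_eq_add (ENNReal.mul_ne_top (hne _) (hne _)) hx
  rw [ENNReal.sub_mul (fun _ _ => hne _), one_mul, hsub]
end

section
/- In the one-step BDAR(1) setup, assume φ1 < 1 and assume that the first component of Z and the first component of Zprev are identically distributed, i.e. P(first component of Z = i) = P(first component of Zprev = i) for all i ∈ S1. Then the first component of Z has the same distribution as the first component of the innovation: P(first component of Z = i) = q1(i) for all i ∈ S1. -/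
open MeasureTheory ProbabilityTheory ENNReal Finset

private lemma bdar_msp {Ω : Type*} [MeasurableSpace Ω] {T : Type*} [MeasurableSpace T]
    [MeasurableSingletonClass T] {g : Ω → T} (hg : Measurable g) (c : T) :
    MeasurableSet {ω | g ω = c} :=
  hg (measurableSet_singleton c)

private lemma bdar_decomp {Ω : Type*} [MeasurableSpace Ω] (P : Measure Ω) {ι : Type*} [Fintype ι]
    (A : Set Ω) (B : ι → Set Ω) (hB : ∀ t, MeasurableSet (B t))
    (hd : Pairwise (Function.onFun Disjoint B)) (hU : A = ⋃ t, B t) :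
    P A = ∑ t, P (B t) := by
  rw [hU, measure_iUnion hd hB, tsum_fintype]

private lemma bdar_sum_factor {A B C : Type*} [Fintype A] [Fintype B] [Fintype C]
    (f : A → ℝ≥0∞) (g : B → ℝ≥0∞) (h : C → ℝ≥0∞) :
    ∑ t : A × B × C, f t.1 * g t.2.1 * h t.2.2
      = (∑ a, f a) * (∑ b, g b) * (∑ c, h c) := by
  rw [Fintype.sum_prod_type]
  simp_rw [Fintype.sum_prod_type]
  rw [Finset.sum_mul_sum, Finset.sum_mul]
  simp_rw [Finset.sum_mul, Finset.mul_sum]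

private lemma bdar_solve (x φ q : ℝ≥0∞) (hφ : φ < 1) (hx : x ≠ ⊤)
    (key : x = φ * x + (1 - φ) * q) : x = q := by
  have hφne : φ ≠ ⊤ := (lt_of_lt_of_le hφ le_top).ne
  have h1 : (1 - φ) * x = x - φ * x := by
    rw [ENNReal.sub_mul (fun _ _ => hx), one_mul]
  have h2 : x - φ * x = (1 - φ) * q := by
    refine ENNReal.sub_eq_of_eq_add (ENNReal.mul_ne_top hφne hx) ?_
    rw [add_comm]; exact key
  have hne0 : (1 - φ) ≠ 0 := (tsub_pos_of_lt hφ).ne'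
  have hnetop : (1 - φ) ≠ ⊤ :=
    (lt_of_le_of_lt tsub_le_self (by norm_num : (1 : ℝ≥0∞) < ⊤)).ne
  exact (ENNReal.mul_right_inj hne0 hnetop).mp (h1.trans h2)

/-- **Stationary marginal distribution of each component of the BDAR(1) model.**
In the one-step BDAR(1) setup, if `φ1 < 1` and the first component of `Z` is distributed
as the first component of `Zprev`, then the first component of `Z` has the same
distribution as the first component of the innovation: `P(Z₁ = i) = q1(i)` for all `i`. -/
theorem bdar1_stationary_marginal_distribution
    {Ω : Type*} [MeasurableSpace Ω] (P : Measure Ω) [IsProbabilityMeasure P]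
    {S1 S2 : Type*} [Fintype S1] [Nonempty S1] [MeasurableSpace S1]
    [DiscreteMeasurableSpace S1]
    [Fintype S2] [Nonempty S2] [MeasurableSpace S2]
    [DiscreteMeasurableSpace S2]
    (Zprev ε : Ω → S1 × S2) (α : Ω → Bool × Bool)
    (hZprevm : Measurable Zprev) (hεm : Measurable ε) (hαm : Measurable α)
    -- mutual independence of the triple (α, ε, Zprev)
    (hindep : ∀ (a : Bool × Bool) (e z : S1 × S2),
      P {ω | α ω = a ∧ ε ω = e ∧ Zprev ω = z}
        = P {ω | α ω = a} * P {ω | ε ω = e} * P {ω | Zprev ω = z})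
    (Z : Ω → S1 × S2)
    (hZ : ∀ ω, Z ω = ((if (α ω).1 then (Zprev ω).1 else (ε ω).1),
                      (if (α ω).2 then (Zprev ω).2 else (ε ω).2)))
    (hφ1 : P {ω | (α ω).1 = true} < 1)
    -- the first components of Z and Zprev are identically distributed
    (hstat : ∀ i : S1, P {ω | (Z ω).1 = i} = P {ω | (Zprev ω).1 = i}) :
    ∀ i : S1, P {ω | (Z ω).1 = i} = P {ω | (ε ω).1 = i} := by
  intro i
  have hα1 : Measurable fun ω => (α ω).1 := hαm.fst
  have hZp1 : Measurable fun ω => (Zprev ω).1 := hZprevm.fst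
  have hε1 : Measurable fun ω => (ε ω).1 := hεm.fst
  -- marginal sums
  have hαsum : ∀ a : Bool, P {ω | (α ω).1 = a} = ∑ b : Bool, P {ω | α ω = (a, b)} := by
    intro a
    refine bdar_decomp P _ (fun b => {ω | α ω = (a, b)}) (fun b => bdar_msp hαm _) ?_ ?_
    · intro b b' hbb'
      simp only [Function.onFun, Set.disjoint_left, Set.mem_setOf_eq]
      intro ω h1 h2
      exact hbb' (by rw [h1] at h2; exact (Prod.mk.injEq _ _ _ _ ▸ h2).2)
    · ext ω
      simp only [Set.mem_setOf_eq, Set.mem_iUnion, Prod.ext_iff]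
      constructor
      · intro h; exact ⟨(α ω).2, h, rfl⟩
      · rintro ⟨b, h, _⟩; exact h
  have hZpsum : P {ω | (Zprev ω).1 = i} = ∑ j : S2, P {ω | Zprev ω = (i, j)} := by
    refine bdar_decomp P _ (fun j => {ω | Zprev ω = (i, j)}) (fun j => bdar_msp hZprevm _) ?_ ?_
    · intro j j' hjj'
      simp only [Function.onFun, Set.disjoint_left, Set.mem_setOf_eq]
      intro ω h1 h2
      exact hjj' (by rw [h1] at h2; exact (Prod.mk.injEq _ _ _ _ ▸ h2).2)
    · ext ω
      simp only [Set.mem_setOf_eq, Set.mem_iUnion, Prod.ext_iff]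
      constructor
      · intro h; exact ⟨(Zprev ω).2, h, rfl⟩
      · rintro ⟨j, h, _⟩; exact h
  have hεsum : P {ω | (ε ω).1 = i} = ∑ j : S2, P {ω | ε ω = (i, j)} := by
    refine bdar_decomp P _ (fun j => {ω | ε ω = (i, j)}) (fun j => bdar_msp hεm _) ?_ ?_
    · intro j j' hjj'
      simp only [Function.onFun, Set.disjoint_left, Set.mem_setOf_eq]
      intro ω h1 h2
      exact hjj' (by rw [h1] at h2; exact (Prod.mk.injEq _ _ _ _ ▸ h2).2)
    · ext ω
      simp only [Set.mem_setOf_eq, Set.mem_iUnion, Prod.ext_iff]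
      constructor
      · intro h; exact ⟨(ε ω).2, h, rfl⟩
      · rintro ⟨j, h, _⟩; exact h
  have hεtotal : ∑ e : S1 × S2, P {ω | ε ω = e} = 1 := by
    have := bdar_decomp P Set.univ (fun e => {ω | ε ω = e}) (fun e => bdar_msp hεm _)
      (by
        intro e e' hee'
        simp only [Function.onFun, Set.disjoint_left, Set.mem_setOf_eq]
        intro ω h1 h2
        exact hee' (h1 ▸ h2 ▸ rfl))
      (by ext ω; simp)
    rw [← this, measure_univ]
  have hZptotal : ∑ z : S1 × S2, P {ω | Zprev ω = z} = 1 := by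
    have := bdar_decomp P Set.univ (fun z => {ω | Zprev ω = z}) (fun z => bdar_msp hZprevm _)
      (by
        intro z z' hzz'
        simp only [Function.onFun, Set.disjoint_left, Set.mem_setOf_eq]
        intro ω h1 h2
        exact hzz' (h1 ▸ h2 ▸ rfl))
      (by ext ω; simp)
    rw [← this, measure_univ]
  -- product formula for the joint first-components with α₁ = a
  have hAZ : P {ω | (α ω).1 = true ∧ (Zprev ω).1 = i}
      = P {ω | (α ω).1 = true} * P {ω | (Zprev ω).1 = i} := by
    have hdec := bdar_decomp P {ω | (α ω).1 = true ∧ (Zprev ω).1 = i}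
      (fun t : Bool × (S1 × S2) × S2 =>
        {ω | α ω = (true, t.1) ∧ ε ω = t.2.1 ∧ Zprev ω = (i, t.2.2)})
      (fun t => ((bdar_msp hαm _).inter ((bdar_msp hεm _).inter (bdar_msp hZprevm _))))
      (by
        rintro ⟨b, e, j⟩ ⟨b', e', j'⟩ htu
        simp only [Function.onFun, Set.disjoint_left, Set.mem_setOf_eq]
        rintro ω ⟨h1, h2, h3⟩ ⟨h1', h2', h3'⟩
        apply htu
        rw [h1] at h1'; rw [h2] at h2'; rw [h3] at h3'
        simp only [Prod.mk.injEq] at h1' h3'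
        simp [h1'.2, h2', h3'.2])
      (by
        ext ω
        simp only [Set.mem_setOf_eq, Set.mem_iUnion, Prod.ext_iff]
        constructor
        · rintro ⟨h1, h2⟩
          exact ⟨⟨(α ω).2, ε ω, (Zprev ω).2⟩, ⟨h1, rfl⟩, ⟨rfl, rfl⟩, h2, rfl⟩
        · rintro ⟨⟨b, e, j⟩, ⟨h1, _⟩, _, h3, _⟩
          exact ⟨h1, h3⟩)
    rw [hdec]
    simp_rw [hindep]
    rw [bdar_sum_factor (fun b => P {ω | α ω = (true, b)}) (fun e => P {ω | ε ω = e})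
      (fun j => P {ω | Zprev ω = (i, j)}), ← hαsum, hεtotal, ← hZpsum, mul_one]
  have hAE : P {ω | (α ω).1 = false ∧ (ε ω).1 = i}
      = P {ω | (α ω).1 = false} * P {ω | (ε ω).1 = i} := by
    have hdec := bdar_decomp P {ω | (α ω).1 = false ∧ (ε ω).1 = i}
      (fun t : Bool × S2 × (S1 × S2) =>
        {ω | α ω = (false, t.1) ∧ ε ω = (i, t.2.1) ∧ Zprev ω = t.2.2})
      (fun t => ((bdar_msp hαm _).inter ((bdar_msp hεm _).inter (bdar_msp hZprevm _))))
      (by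
        rintro ⟨b, j, z⟩ ⟨b', j', z'⟩ htu
        simp only [Function.onFun, Set.disjoint_left, Set.mem_setOf_eq]
        rintro ω ⟨h1, h2, h3⟩ ⟨h1', h2', h3'⟩
        apply htu
        rw [h1] at h1'; rw [h2] at h2'; rw [h3] at h3'
        simp only [Prod.mk.injEq] at h1' h2'
        simp [h1'.2, h2'.2, h3'])
      (by
        ext ω
        simp only [Set.mem_setOf_eq, Set.mem_iUnion, Prod.ext_iff]
        constructor
        · rintro ⟨h1, h2⟩
          exact ⟨⟨(α ω).2, (ε ω).2, Zprev ω⟩, ⟨h1, rfl⟩, ⟨h2, rfl⟩, rfl, rfl⟩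
        · rintro ⟨⟨b, j, z⟩, ⟨h1, _⟩, ⟨h2, _⟩, _⟩
          exact ⟨h1, h2⟩)
    rw [hdec]
    simp_rw [hindep]
    rw [bdar_sum_factor (fun b => P {ω | α ω = (false, b)}) (fun j => P {ω | ε ω = (i, j)})
      (fun z => P {ω | Zprev ω = z}), ← hαsum, ← hεsum, hZptotal, mul_one]
  -- splitting of the event {Z₁ = i}
  have hsplit : P {ω | (Z ω).1 = i}
      = P {ω | (α ω).1 = true ∧ (Zprev ω).1 = i}
        + P {ω | (α ω).1 = false ∧ (ε ω).1 = i} := by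
    have hU : {ω | (Z ω).1 = i}
        = {ω | (α ω).1 = true ∧ (Zprev ω).1 = i} ∪ {ω | (α ω).1 = false ∧ (ε ω).1 = i} := by
      ext ω
      simp only [Set.mem_setOf_eq, Set.mem_union, hZ ω]
      cases h : (α ω).1 <;> simp [h]
    have hdisj : Disjoint {ω | (α ω).1 = true ∧ (Zprev ω).1 = i}
        {ω | (α ω).1 = false ∧ (ε ω).1 = i} := by
      rw [Set.disjoint_left]
      rintro ω ⟨h1, _⟩ ⟨h2, _⟩
      rw [h1] at h2; exact Bool.noConfusion h2
    rw [hU]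
    exact measure_union hdisj ((bdar_msp hα1 _).inter (bdar_msp hε1 _))
  -- complement
  have hfalse : P {ω | (α ω).1 = false} = 1 - P {ω | (α ω).1 = true} := by
    have hc : {ω | (α ω).1 = false} = {ω | (α ω).1 = true}ᶜ := by
      ext ω; simp
    rw [hc, measure_compl (bdar_msp hα1 _) (measure_ne_top P _), measure_univ]
  refine bdar_solve _ (P {ω | (α ω).1 = true}) _ hφ1
    (lt_of_le_of_lt prob_le_one (by norm_num : (1 : ℝ≥0∞) < ⊤)).ne ?_
  calc P {ω | (Z ω).1 = i}
      = P {ω | (α ω).1 = true ∧ (Zprev ω).1 = i}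
        + P {ω | (α ω).1 = false ∧ (ε ω).1 = i} := hsplit
    _ = P {ω | (α ω).1 = true} * P {ω | (Zprev ω).1 = i}
        + (1 - P {ω | (α ω).1 = true}) * P {ω | (ε ω).1 = i} := by
        rw [hAZ, hAE, hfalse]
    _ = P {ω | (α ω).1 = true} * P {ω | (Z ω).1 = i}
        + (1 - P {ω | (α ω).1 = true}) * P {ω | (ε ω).1 = i} := by
        rw [hstat i]
end

section
/- In the one-step BDAR(1) setup, each component is marginally a DAR(1) transition: for all i, s ∈ S1 with P(first component of Zprev = s) > 0, the conditional probability P(first component of Z = i | first component of Zprev = s) = φ1·[i=s] + (1 − φ1)·q1(i). -/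
open MeasureTheory ProbabilityTheory ENNReal

/-- **Each component of the BDAR(1) model is marginally a DAR(1) transition.**
In the one-step BDAR(1) setup, for all `i, s ∈ S1` with `P(Zprev₁ = s) > 0`,
`P(Z₁ = i | Zprev₁ = s) = φ1·[i=s] + (1 - φ1)·q1(i)`. -/
theorem bdar1_component_dar1_transition
    {Ω : Type*} [MeasurableSpace Ω] (P : Measure Ω) [IsProbabilityMeasure P]
    {S1 S2 : Type*} [Fintype S1] [Nonempty S1] [MeasurableSpace S1]
    [DiscreteMeasurableSpace S1] [DecidableEq S1]
    [Fintype S2] [Nonempty S2] [MeasurableSpace S2]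
    [DiscreteMeasurableSpace S2]
    (Zprev ε : Ω → S1 × S2) (α : Ω → Bool × Bool)
    (hZprevm : Measurable Zprev) (hεm : Measurable ε) (hαm : Measurable α)
    -- mutual independence of the triple (α, ε, Zprev)
    (hindep : ∀ (a : Bool × Bool) (e z : S1 × S2),
      P {ω | α ω = a ∧ ε ω = e ∧ Zprev ω = z}
        = P {ω | α ω = a} * P {ω | ε ω = e} * P {ω | Zprev ω = z})
    (Z : Ω → S1 × S2)
    (hZ : ∀ ω, Z ω = ((if (α ω).1 then (Zprev ω).1 else (ε ω).1),
                      (if (α ω).2 then (Zprev ω).2 else (ε ω).2)))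
    (i s : S1)
    (hpos : 0 < P {ω | (Zprev ω).1 = s}) :
    P {ω | (Z ω).1 = i ∧ (Zprev ω).1 = s} / P {ω | (Zprev ω).1 = s}
      = P {ω | (α ω).1 = true} * (if i = s then 1 else 0)
        + (1 - P {ω | (α ω).1 = true}) * P {ω | (ε ω).1 = i} := by
  classical
  set W : Ω → (Bool × Bool) × (S1 × S2) × (S1 × S2) := fun ω => (α ω, ε ω, Zprev ω) with hW
  have hWm : Measurable W := hαm.prodMk (hεm.prodMk hZprevm)
  -- generic: probability of an event about (α, ε, Zprev) as a finite sum over atoms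
  have key : ∀ (Q : (Bool × Bool) × (S1 × S2) × (S1 × S2) → Prop) [DecidablePred Q],
      P {ω | Q (W ω)} = ∑ t ∈ Finset.univ.filter Q,
        P {ω | α ω = t.1} * P {ω | ε ω = t.2.1} * P {ω | Zprev ω = t.2.2} := by
    intro Q _
    have h1 : {ω | Q (W ω)} = W ⁻¹' ((Finset.univ.filter Q : Finset _) : Set _) := by
      ext ω; simp
    rw [h1, ← MeasureTheory.sum_measure_preimage_singleton _
      (fun t _ => hWm (measurableSet_singleton t))]
    refine Finset.sum_congr rfl fun t _ => ?_
    have h2 : W ⁻¹' {t} = {ω | α ω = t.1 ∧ ε ω = t.2.1 ∧ Zprev ω = t.2.2} := by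
      ext ω; simp [hW, Prod.ext_iff, and_assoc]
    rw [h2, hindep]
  -- marginal sums
  have margA : ∀ (Qa : Bool × Bool → Prop) [DecidablePred Qa],
      P {ω | Qa (α ω)} = ∑ a ∈ Finset.univ.filter Qa, P {ω | α ω = a} := by
    intro Qa _
    have h1 : {ω | Qa (α ω)} = α ⁻¹' ((Finset.univ.filter Qa : Finset _) : Set _) := by
      ext ω; simp
    rw [h1, ← MeasureTheory.sum_measure_preimage_singleton _
      (fun a _ => hαm (measurableSet_singleton a))]
    rfl
  have margE : ∀ (Qe : S1 × S2 → Prop) [DecidablePred Qe],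
      P {ω | Qe (ε ω)} = ∑ e ∈ Finset.univ.filter Qe, P {ω | ε ω = e} := by
    intro Qe _
    have h1 : {ω | Qe (ε ω)} = ε ⁻¹' ((Finset.univ.filter Qe : Finset _) : Set _) := by
      ext ω; simp
    rw [h1, ← MeasureTheory.sum_measure_preimage_singleton _
      (fun e _ => hεm (measurableSet_singleton e))]
    rfl
  have margZ : ∀ (Qz : S1 × S2 → Prop) [DecidablePred Qz],
      P {ω | Qz (Zprev ω)} = ∑ z ∈ Finset.univ.filter Qz, P {ω | Zprev ω = z} := by
    intro Qz _
    have h1 : {ω | Qz (Zprev ω)} = Zprev ⁻¹' ((Finset.univ.filter Qz : Finset _) : Set _) := by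
      ext ω; simp
    rw [h1, ← MeasureTheory.sum_measure_preimage_singleton _
      (fun z _ => hZprevm (measurableSet_singleton z))]
    rfl
  -- factorization for product events
  have fact : ∀ (Qa : Bool × Bool → Prop) (Qe Qz : S1 × S2 → Prop)
      [DecidablePred Qa] [DecidablePred Qe] [DecidablePred Qz],
      P {ω | Qa (α ω) ∧ Qe (ε ω) ∧ Qz (Zprev ω)}
        = P {ω | Qa (α ω)} * P {ω | Qe (ε ω)} * P {ω | Qz (Zprev ω)} := by
    intro Qa Qe Qz _ _ _
    have hQ : P {ω | Qa (α ω) ∧ Qe (ε ω) ∧ Qz (Zprev ω)}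
        = P {ω | (fun t : (Bool × Bool) × (S1 × S2) × (S1 × S2) =>
            Qa t.1 ∧ Qe t.2.1 ∧ Qz t.2.2) (W ω)} := rfl
    rw [hQ, key (fun t => Qa t.1 ∧ Qe t.2.1 ∧ Qz t.2.2), margA, margE, margZ]
    have hfil : (Finset.univ.filter fun t : (Bool × Bool) × (S1 × S2) × (S1 × S2) =>
        Qa t.1 ∧ Qe t.2.1 ∧ Qz t.2.2)
        = (Finset.univ.filter Qa) ×ˢ ((Finset.univ.filter Qe) ×ˢ (Finset.univ.filter Qz)) := by
      ext t; simp [Finset.mem_product] <;> tauto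
    rw [hfil, Finset.sum_product]
    simp only [Finset.sum_product, mul_assoc, ← Finset.mul_sum, ← Finset.sum_mul]
    try ring
  -- component-level independence facts
  have hABC : ∀ (b : Bool) (e1 z1 : S1),
      P {ω | (α ω).1 = b ∧ (ε ω).1 = e1 ∧ (Zprev ω).1 = z1}
        = P {ω | (α ω).1 = b} * P {ω | (ε ω).1 = e1} * P {ω | (Zprev ω).1 = z1} :=
    fun b e1 z1 => fact (fun a => a.1 = b) (fun e => e.1 = e1) (fun z => z.1 = z1)
  have hAC : ∀ (b : Bool) (z1 : S1),
      P {ω | (α ω).1 = b ∧ (Zprev ω).1 = z1}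
        = P {ω | (α ω).1 = b} * P {ω | (Zprev ω).1 = z1} := by
    intro b z1
    have h := fact (fun a => a.1 = b) (fun _ => True) (fun z => z.1 = z1)
    simpa using h
  -- split numerator event on α₁
  have hsplit : {ω | (Z ω).1 = i ∧ (Zprev ω).1 = s}
      = {ω | (α ω).1 = true ∧ (Zprev ω).1 = i ∧ (Zprev ω).1 = s}
        ∪ {ω | (α ω).1 = false ∧ (ε ω).1 = i ∧ (Zprev ω).1 = s} := by
    ext ω
    simp only [Set.mem_setOf_eq, Set.mem_union, hZ ω]
    cases hb : (α ω).1 <;> simp [hb] <;> try tauto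
  have hmA : ∀ b : Bool, MeasurableSet {ω | (α ω).1 = b} := fun b =>
    (measurable_fst.comp hαm) (measurableSet_singleton b)
  have hmZ : ∀ z : S1, MeasurableSet {ω | (Zprev ω).1 = z} := fun z =>
    (measurable_fst.comp hZprevm) (measurableSet_singleton z)
  have hmE : ∀ e : S1, MeasurableSet {ω | (ε ω).1 = e} := fun e =>
    (measurable_fst.comp hεm) (measurableSet_singleton e)
  have hmB : MeasurableSet {ω | (α ω).1 = false ∧ (ε ω).1 = i ∧ (Zprev ω).1 = s} := by
    have : {ω | (α ω).1 = false ∧ (ε ω).1 = i ∧ (Zprev ω).1 = s}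
        = {ω | (α ω).1 = false} ∩ ({ω | (ε ω).1 = i} ∩ {ω | (Zprev ω).1 = s}) := by
      ext ω; simp [Set.mem_inter_iff] <;> tauto
    rw [this]; exact (hmA false).inter ((hmE i).inter (hmZ s))
  have hdisj : Disjoint {ω | (α ω).1 = true ∧ (Zprev ω).1 = i ∧ (Zprev ω).1 = s}
      {ω | (α ω).1 = false ∧ (ε ω).1 = i ∧ (Zprev ω).1 = s} := by
    rw [Set.disjoint_left]
    rintro ω ⟨h1, -⟩ ⟨h2, -⟩
    rw [h1] at h2; exact Bool.noConfusion h2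
  have hnum : P {ω | (Z ω).1 = i ∧ (Zprev ω).1 = s}
      = P {ω | (α ω).1 = true ∧ (Zprev ω).1 = i ∧ (Zprev ω).1 = s}
        + P {ω | (α ω).1 = false ∧ (ε ω).1 = i ∧ (Zprev ω).1 = s} := by
    rw [hsplit, measure_union hdisj hmB]
  -- compute the two pieces
  have hpiece1 : P {ω | (α ω).1 = true ∧ (Zprev ω).1 = i ∧ (Zprev ω).1 = s}
      = P {ω | (α ω).1 = true} * (if i = s then 1 else 0) * P {ω | (Zprev ω).1 = s} := by
    by_cases his : i = s
    · subst his
      have : {ω | (α ω).1 = true ∧ (Zprev ω).1 = i ∧ (Zprev ω).1 = i}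
          = {ω | (α ω).1 = true ∧ (Zprev ω).1 = i} := by
        ext ω; simp only [Set.mem_setOf_eq]; tauto
      rw [this, hAC]; simp
    · have : {ω | (α ω).1 = true ∧ (Zprev ω).1 = i ∧ (Zprev ω).1 = s} = (∅ : Set Ω) := by
        ext ω; simp; rintro - h1 h2; exact his (h1 ▸ h2 ▸ rfl)
      rw [this]; simp [his]
  have hpiece2 : P {ω | (α ω).1 = false ∧ (ε ω).1 = i ∧ (Zprev ω).1 = s}
      = (1 - P {ω | (α ω).1 = true}) * P {ω | (ε ω).1 = i} * P {ω | (Zprev ω).1 = s} := by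
    rw [hABC]
    congr 2
    have hc : {ω | (α ω).1 = false} = {ω | (α ω).1 = true}ᶜ := by
      ext ω; simp
    rw [hc, measure_compl (hmA true) (measure_ne_top P _), measure_univ]
  -- finish
  have hc0 : P {ω | (Zprev ω).1 = s} ≠ 0 := hpos.ne'
  have hcT : P {ω | (Zprev ω).1 = s} ≠ ∞ := measure_ne_top P _
  rw [eq_comm, ENNReal.eq_div_iff hc0 hcT, hnum, hpiece1, hpiece2]
  ring
end

section
/- In the one-step BDAR(1) setup (with no stationarity assumption), the law of Z evolves from the law of Zprev by: for all (i,j) ∈ S1 × S2, P(Z = (i,j)) = π11·P(Zprev = (i,j)) + π10·P(first component of Zprev = i)·q2(j) + π01·q1(i)·P(second component of Zprev = j) + π00·q(i,j). -/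
open MeasureTheory ProbabilityTheory ENNReal


lemma atom_sum {Ω : Type*} [MeasurableSpace Ω] (P : Measure Ω) {T : Type*} [Fintype T]
    {W : Ω → T} (hW : ∀ t : T, MeasurableSet {ω | W ω = t})
    (p : T → Prop) [DecidablePred p] :
    P {ω | p (W ω)} = ∑ t : T, if p t then P {ω | W ω = t} else 0 := by
  classical
  have h1 : {ω | p (W ω)} = W ⁻¹' ((Finset.univ.filter p : Finset T) : Set T) := by
    ext ω; simp
  have h2 : ∀ t : T, W ⁻¹' {t} = {ω | W ω = t} := fun t => rfl
  rw [h1, ← MeasureTheory.sum_measure_preimage_singleton _ (fun t _ => by rw [h2]; exact hW t),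
      Finset.sum_filter]
  simp [h2]

lemma key_sum {S1 S2 : Type*} [Fintype S1] [Fintype S2] [DecidableEq S1] [DecidableEq S2]
    (π : Bool × Bool → ℝ≥0∞) (q r : S1 × S2 → ℝ≥0∞) (hq : ∑ e, q e = 1) (hr : ∑ z, r z = 1)
    (i : S1) (j : S2) :
    ∑ a : Bool × Bool, ∑ e : S1 × S2, ∑ z : S1 × S2,
      (if ((if a.1 then z.1 else e.1) = i ∧ (if a.2 then z.2 else e.2) = j)
        then π a * q e * r z else 0)
    = π (true, true) * r (i, j)
      + π (true, false) * (∑ z, if z.1 = i then r z else 0) * (∑ e, if e.2 = j then q e else 0)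
      + π (false, true) * (∑ e, if e.1 = i then q e else 0) * (∑ z, if z.2 = j then r z else 0)
      + π (false, false) * q (i, j) := by
  classical
  have hsplit : ∀ (c : ℝ≥0∞) (A : S1 × S2 → Prop) (B : S1 × S2 → Prop)
      [DecidablePred A] [DecidablePred B],
      (∑ e : S1 × S2, ∑ z : S1 × S2, if (B z ∧ A e) then c * q e * r z else 0)
        = c * (∑ z, if B z then r z else 0) * (∑ e, if A e then q e else 0) := by
    intro c A B _ _
    rw [mul_assoc, mul_comm (∑ z, if B z then r z else 0), Finset.sum_mul_sum, Finset.mul_sum]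
    refine Finset.sum_congr rfl fun e _ => ?_
    rw [Finset.mul_sum]
    refine Finset.sum_congr rfl fun z _ => ?_
    by_cases hA : A e <;> by_cases hB : B z <;> simp [hA, hB] <;> ring
  have hsplit2 : ∀ (c : ℝ≥0∞) (A : S1 × S2 → Prop) (B : S1 × S2 → Prop)
      [DecidablePred A] [DecidablePred B],
      (∑ e : S1 × S2, ∑ z : S1 × S2, if (A e ∧ B z) then c * q e * r z else 0)
        = c * (∑ e, if A e then q e else 0) * (∑ z, if B z then r z else 0) := by
    intro c A B _ _
    have := hsplit c A B
    simp only [and_comm (a := A _) (b := B _)] at *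
    rw [this, mul_assoc, mul_assoc, mul_comm (∑ z : S1 × S2, if B z then r z else 0)]
  rw [Fintype.sum_prod_type]
  simp only [Fintype.sum_bool, Bool.false_eq_true, if_true, if_false]
  have hTT : (∑ e : S1 × S2, ∑ z : S1 × S2,
      if (z.1 = i ∧ z.2 = j) then π (true, true) * q e * r z else 0)
      = π (true, true) * r (i, j) := by
    have h1 : ∀ e : S1 × S2, (∑ z : S1 × S2,
        if (z.1 = i ∧ z.2 = j) then π (true, true) * q e * r z else 0)
        = π (true, true) * q e * r (i, j) := by
      intro e
      have h0 : ∀ z : S1 × S2, (z.1 = i ∧ z.2 = j) ↔ z = (i, j) := by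
        intro z; constructor
        · rintro ⟨h1, h2⟩; exact Prod.ext h1 h2
        · rintro rfl; exact ⟨rfl, rfl⟩
      simp only [h0]
      rw [Finset.sum_ite_eq' Finset.univ (i, j)]
      simp
    calc (∑ e : S1 × S2, ∑ z : S1 × S2,
        if (z.1 = i ∧ z.2 = j) then π (true, true) * q e * r z else 0)
        = ∑ e : S1 × S2, π (true, true) * q e * r (i, j) :=
          Finset.sum_congr rfl fun e _ => h1 e
      _ = π (true, true) * (∑ e, q e) * r (i, j) := by
          rw [Finset.mul_sum, Finset.sum_mul]
      _ = π (true, true) * r (i, j) := by rw [hq, mul_one]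
  have hFF : (∑ e : S1 × S2, ∑ z : S1 × S2,
      if (e.1 = i ∧ e.2 = j) then π (false, false) * q e * r z else 0)
      = π (false, false) * q (i, j) := by
    have h1 : ∀ e : S1 × S2, (∑ z : S1 × S2,
        if (e.1 = i ∧ e.2 = j) then π (false, false) * q e * r z else 0)
        = if e = (i, j) then π (false, false) * q e else 0 := by
      intro e
      have h0 : (e.1 = i ∧ e.2 = j) ↔ e = (i, j) := by
        constructor
        · rintro ⟨h1, h2⟩; exact Prod.ext h1 h2
        · rintro rfl; exact ⟨rfl, rfl⟩
      by_cases he : e = (i, j)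
      · have h2 : ∀ z : S1 × S2, (if (e.1 = i ∧ e.2 = j) then π (false, false) * q e * r z else 0)
            = π (false, false) * q e * r z := fun z => if_pos (h0.mpr he)
        rw [Finset.sum_congr rfl fun z _ => h2 z, ← Finset.mul_sum, hr, mul_one, if_pos he]
      · simp [h0, he]
    rw [Finset.sum_congr rfl fun e _ => h1 e, Finset.sum_ite_eq' Finset.univ (i, j)]
    simp
  rw [hTT, hFF, hsplit (π (true, false)) (fun e => e.2 = j) (fun z => z.1 = i),
    hsplit2 (π (false, true)) (fun e => e.1 = i) (fun z => z.2 = j)]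
  ring

/-- **One-step evolution of the law of the BDAR(1) model (no stationarity assumed).**
In the one-step BDAR(1) setup, for all `(i,j)`,
`P(Z = (i,j)) = π11·P(Zprev = (i,j)) + π10·P(Zprev₁ = i)·q2(j)
  + π01·q1(i)·P(Zprev₂ = j) + π00·q(i,j)`. -/
theorem bdar1_law_evolution
    {Ω : Type*} [MeasurableSpace Ω] (P : Measure Ω) [IsProbabilityMeasure P]
    {S1 S2 : Type*} [Fintype S1] [Nonempty S1] [MeasurableSpace S1]
    [DiscreteMeasurableSpace S1]
    [Fintype S2] [Nonempty S2] [MeasurableSpace S2]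
    [DiscreteMeasurableSpace S2]
    (Zprev ε : Ω → S1 × S2) (α : Ω → Bool × Bool)
    (hZprevm : Measurable Zprev) (hεm : Measurable ε) (hαm : Measurable α)
    -- mutual independence of the triple (α, ε, Zprev)
    (hindep : ∀ (a : Bool × Bool) (e z : S1 × S2),
      P {ω | α ω = a ∧ ε ω = e ∧ Zprev ω = z}
        = P {ω | α ω = a} * P {ω | ε ω = e} * P {ω | Zprev ω = z})
    (Z : Ω → S1 × S2)
    (hZ : ∀ ω, Z ω = ((if (α ω).1 then (Zprev ω).1 else (ε ω).1),
                      (if (α ω).2 then (Zprev ω).2 else (ε ω).2)))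
    (i : S1) (j : S2) :
    P {ω | Z ω = (i, j)}
      = P {ω | α ω = (true, true)} * P {ω | Zprev ω = (i, j)}
        + P {ω | α ω = (true, false)} * P {ω | (Zprev ω).1 = i} * P {ω | (ε ω).2 = j}
        + P {ω | α ω = (false, true)} * P {ω | (ε ω).1 = i} * P {ω | (Zprev ω).2 = j}
        + P {ω | α ω = (false, false)} * P {ω | ε ω = (i, j)} := by
  classical
  set W : Ω → (Bool × Bool) × (S1 × S2) × (S1 × S2) := fun ω => (α ω, ε ω, Zprev ω) with hWdef
  have hWm : ∀ t, MeasurableSet {ω | W ω = t} := by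
    intro t
    have : {ω | W ω = t} = W ⁻¹' {t} := rfl
    rw [this]
    exact (hαm.prodMk (hεm.prodMk hZprevm)) (measurableSet_singleton t)
  have hatom : ∀ (a : Bool × Bool) (e z : S1 × S2),
      P {ω | W ω = (a, e, z)}
        = P {ω | α ω = a} * P {ω | ε ω = e} * P {ω | Zprev ω = z} := by
    intro a e z
    rw [← hindep]
    congr 1
    ext ω
    simp [hWdef, Prod.ext_iff, and_assoc]
  -- sums over ε and Zprev atoms
  have hεS : ∀ (p : S1 × S2 → Prop) [DecidablePred p],
      P {ω | p (ε ω)} = ∑ e : S1 × S2, if p e then P {ω | ε ω = e} else 0 := by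
    intro p _
    exact atom_sum P (fun e => hεm (measurableSet_singleton e)) p
  have hZS : ∀ (p : S1 × S2 → Prop) [DecidablePred p],
      P {ω | p (Zprev ω)} = ∑ z : S1 × S2, if p z then P {ω | Zprev ω = z} else 0 := by
    intro p _
    exact atom_sum P (fun z => hZprevm (measurableSet_singleton z)) p
  have hq1 : ∑ e : S1 × S2, P {ω | ε ω = e} = 1 := by
    have := hεS (fun _ => True)
    simp at this
    simpa using this.symm
  have hr1 : ∑ z : S1 × S2, P {ω | Zprev ω = z} = 1 := by
    have := hZS (fun _ => True)
    simp at this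
    simpa using this.symm
  -- LHS as sum over atoms of W
  have hLHS : P {ω | Z ω = (i, j)}
      = ∑ t : (Bool × Bool) × (S1 × S2) × (S1 × S2),
          if ((if t.1.1 then t.2.2.1 else t.2.1.1) = i ∧ (if t.1.2 then t.2.2.2 else t.2.1.2) = j)
          then P {ω | W ω = t} else 0 := by
    have hset : {ω | Z ω = (i, j)}
        = {ω | (fun t : (Bool × Bool) × (S1 × S2) × (S1 × S2) =>
            (if t.1.1 then t.2.2.1 else t.2.1.1) = i ∧ (if t.1.2 then t.2.2.2 else t.2.1.2) = j)
            (W ω)} := by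
      ext ω
      simp only [Set.mem_setOf_eq, hZ ω, Prod.ext_iff, hWdef]
    rw [hset]
    exact atom_sum P hWm (fun t => (if t.1.1 then t.2.2.1 else t.2.1.1) = i ∧
      (if t.1.2 then t.2.2.2 else t.2.1.2) = j)
  rw [hLHS]
  have := key_sum (fun a => P {ω | α ω = a}) (fun e => P {ω | ε ω = e})
    (fun z => P {ω | Zprev ω = z}) hq1 hr1 i j
  calc (∑ t : (Bool × Bool) × (S1 × S2) × (S1 × S2),
        if ((if t.1.1 then t.2.2.1 else t.2.1.1) = i ∧ (if t.1.2 then t.2.2.2 else t.2.1.2) = j)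
        then P {ω | W ω = t} else 0)
      = ∑ a : Bool × Bool, ∑ e : S1 × S2, ∑ z : S1 × S2,
          (if ((if a.1 then z.1 else e.1) = i ∧ (if a.2 then z.2 else e.2) = j)
            then P {ω | α ω = a} * P {ω | ε ω = e} * P {ω | Zprev ω = z} else 0) := by
        rw [Fintype.sum_prod_type]
        refine Finset.sum_congr rfl fun a _ => ?_
        rw [Fintype.sum_prod_type]
        refine Finset.sum_congr rfl fun e _ => ?_
        refine Finset.sum_congr rfl fun z _ => ?_
        rw [hatom]
    _ = _ := by
        rw [this, hεS (fun e => e.2 = j), hεS (fun e => e.1 = i),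
          hZS (fun z => z.1 = i), hZS (fun z => z.2 = j)]
end

section
/- The explicit pmf p(i,j) = ((π10 + π01)·p1(i)·p2(j) + π00·q(i,j)) / (1 − π11) is invariant for the BDAR(1) transition kernel: for every (i,j) ∈ S1 × S2, the sum over all (s,ℓ) ∈ S1 × S2 of p(s,ℓ)·K((s,ℓ),(i,j)) equals p(i,j). -/
open Finset

/-- **Invariance of the explicit pmf for the BDAR(1) transition kernel.**
The pmf `p(i,j) = ((π10 + π01)·p1(i)·p2(j) + π00·q(i,j)) / (1 - π11)` is invariant for
the BDAR(1) transition kernel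
`K((s,ℓ),(i,j)) = π11·[(i,j)=(s,ℓ)] + π10·[i=s]·p2(j) + π01·p1(i)·[j=ℓ] + π00·q(i,j)`:
for every `(i,j)`, `∑_{(s,ℓ)} p(s,ℓ)·K((s,ℓ),(i,j)) = p(i,j)`. -/
theorem bdar1_kernel_invariant_pmf
    {S1 S2 : Type*} [Fintype S1] [Nonempty S1] [DecidableEq S1]
    [Fintype S2] [Nonempty S2] [DecidableEq S2]
    (p1 : S1 → ℝ) (p2 : S2 → ℝ) (q : S1 × S2 → ℝ)
    (hp1 : ∀ i, 0 ≤ p1 i) (hp1sum : ∑ i, p1 i = 1)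
    (hp2 : ∀ j, 0 ≤ p2 j) (hp2sum : ∑ j, p2 j = 1)
    (hq : ∀ ij, 0 ≤ q ij) (hqsum : ∑ ij : S1 × S2, q ij = 1)
    (hqmarg1 : ∀ i, ∑ j, q (i, j) = p1 i)
    (hqmarg2 : ∀ j, ∑ i, q (i, j) = p2 j)
    (π11 π10 π01 π00 : ℝ)
    (h11 : 0 ≤ π11) (h10 : 0 ≤ π10) (h01 : 0 ≤ π01) (h00 : 0 ≤ π00)
    (hπsum : π11 + π10 + π01 + π00 = 1) (hπlt : π11 < 1)
    (K : S1 × S2 → S1 × S2 → ℝ)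
    (hK : ∀ (s : S1) (ℓ : S2) (i : S1) (j : S2),
      K (s, ℓ) (i, j)
        = π11 * (if (i, j) = (s, ℓ) then 1 else 0)
          + π10 * (if i = s then 1 else 0) * p2 j
          + π01 * p1 i * (if j = ℓ then 1 else 0)
          + π00 * q (i, j))
    (p : S1 × S2 → ℝ)
    (hp : ∀ (i : S1) (j : S2),
      p (i, j) = ((π10 + π01) * p1 i * p2 j + π00 * q (i, j)) / (1 - π11))
    (i : S1) (j : S2) :
    ∑ sℓ : S1 × S2, p sℓ * K sℓ (i, j) = p (i, j) := by

  have hne : (1 - π11) ≠ 0 := by linarith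
  have hrow : ∀ s, ∑ ℓ, p (s, ℓ) = p1 s := by
    intro s
    simp only [hp]
    rw [← Finset.sum_div]
    rw [Finset.sum_add_distrib, ← Finset.mul_sum, ← Finset.mul_sum]
    rw [hp2sum, hqmarg1]
    field_simp
    linear_combination p1 s * hπsum
  have hcol : ∀ ℓ, ∑ s, p (s, ℓ) = p2 ℓ := by
    intro ℓ
    simp only [hp]
    rw [← Finset.sum_div]
    rw [Finset.sum_add_distrib]
    have h1 : ∑ s, (π10 + π01) * p1 s * p2 ℓ = (π10 + π01) * p2 ℓ := by
      rw [← Finset.sum_mul, ← Finset.mul_sum, hp1sum]; ring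
    have h2 : ∑ s, π00 * q (s, ℓ) = π00 * p2 ℓ := by
      rw [← Finset.mul_sum, hqmarg2]
    rw [h1, h2]
    field_simp
    linear_combination p2 ℓ * hπsum
  have htot : ∑ sℓ : S1 × S2, p sℓ = 1 := by
    rw [Fintype.sum_prod_type]
    simp only [hrow]
    exact hp1sum
  have key : ∑ sℓ : S1 × S2, p sℓ * K sℓ (i, j)
      = π11 * p (i, j) + π10 * p1 i * p2 j + π01 * p1 i * p2 j + π00 * q (i, j) := by
    have expand : ∀ sℓ : S1 × S2, p sℓ * K sℓ (i, j)
        = π11 * (if (i, j) = sℓ then p sℓ else 0)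
          + π10 * p2 j * (if i = sℓ.1 then p sℓ else 0)
          + π01 * p1 i * (if j = sℓ.2 then p sℓ else 0)
          + π00 * q (i, j) * p sℓ := by
      rintro ⟨s, ℓ⟩
      rw [hK]
      by_cases h1 : i = s <;> by_cases h2 : j = ℓ <;>
        simp [h1, h2, Prod.ext_iff] <;> ring
    simp only [expand, Finset.sum_add_distrib]
    have A : ∑ sℓ : S1 × S2, (if (i, j) = sℓ then p sℓ else 0) = p (i, j) := by
      rw [Finset.sum_ite_eq Finset.univ (i, j) p]
      simp
    have B : ∑ sℓ : S1 × S2, (if i = sℓ.1 then p sℓ else 0) = p1 i := by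
      rw [Fintype.sum_prod_type]
      have : ∀ s, ∑ ℓ, (if i = s then p (s, ℓ) else 0)
          = if i = s then p1 s else 0 := by
        intro s
        by_cases h : i = s <;> simp [h, hrow]
      simp only [this]
      simp [Finset.sum_ite_eq]
    have C : ∑ sℓ : S1 × S2, (if j = sℓ.2 then p sℓ else 0) = p2 j := by
      rw [Fintype.sum_prod_type_right]
      have : ∀ ℓ, ∑ s, (if j = ℓ then p (s, ℓ) else 0)
          = if j = ℓ then p2 ℓ else 0 := by
        intro ℓ
        by_cases h : j = ℓ <;> simp [h, hcol]
      simp only [this]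
      simp [Finset.sum_ite_eq]
    rw [← Finset.mul_sum, ← Finset.mul_sum, ← Finset.mul_sum, ← Finset.mul_sum,
      A, B, C, htot]
    ring
  rw [key, hp i j]
  field_simp
  ring
end

section
/- Let Zprev, ε, W : Ω → ℝ be bounded random variables on a probability space (Ω, P) and let A : Ω → Bool, such that A is independent of the triple (Zprev, ε, W), ε is independent of W, and E[ε] = E[Zprev]. Define Z(ω) = Zprev(ω) if A(ω) is true and Z(ω) = ε(ω) otherwise, and set φ = P(A = true). Then Cov(Z, W) = φ·Cov(Zprev, W). -/
/-!
Write `Z = 1_A · Zprev + 1_{Aᶜ} · ε`. Independence of `A` from `(Zprev, ε, W)` lets the indicators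
factor out of the expectations, so that with `E[εW] = E[ε] E[W]`
`E[ZW] = φ E[Zprev W] + (1 - φ) E[ε] E[W]` and `E[Z] = φ E[Zprev] + (1 - φ) E[ε]`.
Since `E[ε] = E[Zprev]`, the `(1 - φ)` terms cancel in the covariance.
-/

open MeasureTheory ProbabilityTheory

section
variable {Ω : Type*} [MeasurableSpace Ω] {P : Measure Ω}

lemma integral_ite_eq_measureReal_mul_of_indepFun {A : Ω → Bool} {X : Ω → ℝ}
    (hA : Measurable A) (hX : AEStronglyMeasurable X P) (hAX : IndepFun A X P) (b : Bool) :
    ∫ ω, (if A ω = b then X ω else 0) ∂P = P.real {ω | A ω = b} * ∫ ω, X ω ∂P := by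
  have hAb : MeasurableSet {ω | A ω = b} := hA (measurableSet_singleton b)
  set I : Ω → ℝ := {ω | A ω = b}.indicator 1
  have hind : IndepFun I X P :=
    hAX.comp (φ := ({b} : Set Bool).indicator 1) (ψ := id) measurable_from_top measurable_id
  calc ∫ ω, (if A ω = b then X ω else 0) ∂P = ∫ ω, (I * X) ω ∂P := by
        congr 1; funext ω; by_cases h : A ω = b <;> simp [I, h]
    _ = (∫ ω, I ω ∂P) * ∫ ω, X ω ∂P :=
        hind.integral_mul_eq_mul_integral
          ((measurable_one.indicator hAb).aestronglyMeasurable) hX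
    _ = P.real {ω | A ω = b} * ∫ ω, X ω ∂P := by rw [integral_indicator_one hAb]

lemma integral_ite_of_indepFun [IsProbabilityMeasure P] {A : Ω → Bool} {X Y : Ω → ℝ}
    (hA : Measurable A) (hX : Integrable X P) (hY : Integrable Y P)
    (hAX : IndepFun A X P) (hAY : IndepFun A Y P) :
    ∫ ω, (if A ω then X ω else Y ω) ∂P
      = P.real {ω | A ω = true} * ∫ ω, X ω ∂P
        + (1 - P.real {ω | A ω = true}) * ∫ ω, Y ω ∂P := by
  have hsplit : (fun ω => if A ω then X ω else Y ω)
      = fun ω => (if A ω = true then X ω else 0) + (if A ω = false then Y ω else 0) := by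
    funext ω; cases A ω <;> simp
  have hfalse : {ω | A ω = false} = {ω | A ω = true}ᶜ := by ext ω; simp
  have hAt : MeasurableSet {ω | A ω = true} := hA (measurableSet_singleton true)
  rw [hsplit, integral_add, integral_ite_eq_measureReal_mul_of_indepFun hA hX.1 hAX,
    integral_ite_eq_measureReal_mul_of_indepFun hA hY.1 hAY, hfalse,
    probReal_compl_eq_one_sub hAt]
  · exact (hX.indicator hAt).congr (.of_forall fun ω => by simp [Set.indicator])
  · exact (hY.indicator (hA (measurableSet_singleton false))).congr
      (.of_forall fun ω => by simp [Set.indicator])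

lemma memLp_top_of_abs_le {f : Ω → ℝ} (hf : Measurable f) (hb : ∃ C, ∀ ω, |f ω| ≤ C) :
    MemLp f ⊤ P := by
  obtain ⟨C, hC⟩ := hb
  exact memLp_top_of_bound hf.aestronglyMeasurable C (.of_forall hC)

end

/-- **One-step covariance recursion for the DAR(1)/BDAR(1) models.**
Let `Zprev, ε, W : Ω → ℝ` be bounded random variables and `A : Ω → Bool`, with `A`
independent of the triple `(Zprev, ε, W)`, `ε` independent of `W`, and `E[ε] = E[Zprev]`.
Set `Z = if A then Zprev else ε` and `φ = P(A = true)`. Then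
`Cov(Z, W) = φ·Cov(Zprev, W)`, where `Cov(X, Y) = E[X·Y] - E[X]·E[Y]`. -/
theorem dar1_covariance_recursion
    {Ω : Type*} [MeasurableSpace Ω] (P : Measure Ω) [IsProbabilityMeasure P]
    (Zprev ε W : Ω → ℝ) (A : Ω → Bool)
    (hZprevm : Measurable Zprev) (hεm : Measurable ε) (hWm : Measurable W)
    (hAm : Measurable A)
    (hZprevb : ∃ C, ∀ ω, |Zprev ω| ≤ C)
    (hεb : ∃ C, ∀ ω, |ε ω| ≤ C)
    (hWb : ∃ C, ∀ ω, |W ω| ≤ C)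
    (hAindep : IndepFun A (fun ω => (Zprev ω, ε ω, W ω)) P)
    (hεW : IndepFun ε W P)
    (hmean : ∫ ω, ε ω ∂P = ∫ ω, Zprev ω ∂P)
    (Z : Ω → ℝ)
    (hZ : ∀ ω, Z ω = if A ω then Zprev ω else ε ω)
    (φ : ℝ) (hφ : φ = (P {ω | A ω = true}).toReal) :
    (∫ ω, Z ω * W ω ∂P) - (∫ ω, Z ω ∂P) * (∫ ω, W ω ∂P)
      = φ * ((∫ ω, Zprev ω * W ω ∂P) - (∫ ω, Zprev ω ∂P) * (∫ ω, W ω ∂P)) := by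
  have hZprevi : Integrable Zprev P := (memLp_top_of_abs_le hZprevm hZprevb).integrable le_top
  have hεi : Integrable ε P := (memLp_top_of_abs_le hεm hεb).integrable le_top
  have hWL : MemLp W ⊤ P := memLp_top_of_abs_le hWm hWb
  have hZprevWi : Integrable (fun ω => Zprev ω * W ω) P := hZprevi.mul_of_top_left hWL
  have hεWi : Integrable (fun ω => ε ω * W ω) P := hεi.mul_of_top_left hWL
  have hεW_mul : ∫ ω, ε ω * W ω ∂P = (∫ ω, ε ω ∂P) * ∫ ω, W ω ∂P :=
    hεW.integral_mul_eq_mul_integral hεm.aestronglyMeasurable hWm.aestronglyMeasurable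
  have hA_ZprevW : IndepFun A (fun ω => Zprev ω * W ω) P :=
    hAindep.comp measurable_id (measurable_fst.mul (measurable_snd.comp measurable_snd))
  have hA_εW : IndepFun A (fun ω => ε ω * W ω) P :=
    hAindep.comp measurable_id
      ((measurable_fst.comp measurable_snd).mul (measurable_snd.comp measurable_snd))
  have hA_Zprev : IndepFun A Zprev P := hAindep.comp measurable_id measurable_fst
  have hA_ε : IndepFun A ε P := hAindep.comp measurable_id (measurable_fst.comp measurable_snd)
  simp_rw [hZ, ite_mul]
  rw [integral_ite_of_indepFun hAm hZprevWi hεWi hA_ZprevW hA_εW,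
    integral_ite_of_indepFun hAm hZprevi hεi hA_Zprev hA_ε,
    hεW_mul, hmean, measureReal_def, ← hφ]
  ring
end

section
/- In the real-valued one-step BDAR(1) setup, E[Z1·Z2] = φ12·E[Z1p·Z2p] + (φ1 − φ12)·E[Z1p]·E[ε2] + (φ2 − φ12)·E[ε1]·E[Z2p] + (1 − φ1 − φ2 + φ12)·E[ε1·ε2]. -/
open MeasureTheory ProbabilityTheory

/-! Split `Z1 Z2` according to the four values of `α`. Since `α` is independent of
`(Z1p, Z2p, ε1, ε2)`, each piece factors as `P(α = a)` times the expectation of the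
corresponding product; the independence of `(ε1, ε2)` and `(Z1p, Z2p)` factors the two mixed
products, and the four atom probabilities are `φ12`, `φ1 - φ12`, `φ2 - φ12` and
`1 - φ1 - φ2 + φ12`. -/

section

variable {Ω β γ : Type*} [MeasurableSpace Ω] [MeasurableSpace β] [MeasurableSpace γ]
  {P : Measure Ω}

lemma integrable_mul_of_bounded [IsFiniteMeasure P] {f g : Ω → ℝ}
    (hf : Measurable f) (hg : Measurable g)
    (hfb : ∃ C, ∀ ω, |f ω| ≤ C) (hgb : ∃ C, ∀ ω, |g ω| ≤ C) :
    Integrable (fun ω => f ω * g ω) P := by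
  obtain ⟨C, hC⟩ := hfb
  obtain ⟨D, hD⟩ := hgb
  exact (Integrable.of_bound hg.aestronglyMeasurable D (ae_of_all _ hD)).bdd_mul
    hf.aestronglyMeasurable (c := C) (ae_of_all _ hC)

lemma measureReal_preimage_eq_sum [IsFiniteMeasure P] [Fintype β] [MeasurableSingletonClass β]
    {X : Ω → β} (hX : Measurable X) (s : Set β) [DecidablePred (· ∈ s)] :
    P.real (X ⁻¹' s) = ∑ b with b ∈ s, P.real (X ⁻¹' {b}) := by
  rw [sum_measureReal_preimage_singleton _ fun b _ => hX (measurableSet_singleton b),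
    Finset.coe_filter_univ]
  rfl

lemma ProbabilityTheory.IndepFun.integral_comp_eq_sum [Fintype β] [MeasurableSingletonClass β]
    {X : Ω → β} {Y : Ω → γ} (hXY : IndepFun X Y P) (hX : Measurable X) (hY : AEMeasurable Y P)
    {F : β → γ → ℝ} (hFm : ∀ b, Measurable (F b))
    (hF : ∀ b, Integrable (fun ω => F b (Y ω)) P) :
    ∫ ω, F (X ω) (Y ω) ∂P = ∑ b, P.real (X ⁻¹' {b}) * ∫ ω, F b (Y ω) ∂P := by
  have hfiber : ∀ b, MeasurableSet (X ⁻¹' {b}) := fun b => hX (measurableSet_singleton b)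
  have hcover : (⋃ b, X ⁻¹' {b}) = Set.univ := by
    rw [← Set.preimage_iUnion, Set.iUnion_singleton_eq_range, Set.range_id', Set.preimage_univ]
  have hon : ∀ b, Set.EqOn (fun ω => F b (Y ω)) (fun ω => F (X ω) (Y ω)) (X ⁻¹' {b}) :=
    fun b ω (hω : X ω = b) => by simp only [hω]
  calc ∫ ω, F (X ω) (Y ω) ∂P
      = ∑ b, ∫ ω in X ⁻¹' {b}, F (X ω) (Y ω) ∂P := by
        rw [← setIntegral_univ, ← hcover]
        refine integral_iUnion_fintype hfiber ?_ fun b => ?_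
        · exact fun b c hbc => Set.disjoint_singleton.2 hbc |>.preimage X
        · exact (hF b).integrableOn.congr_fun (hon b) (hfiber b)
    _ = ∑ b, P.real (X ⁻¹' {b}) * ∫ ω, F b (Y ω) ∂P := by
        refine Finset.sum_congr rfl fun b _ => ?_
        rw [← setIntegral_congr_fun (hfiber b) (hon b)]
        exact ((IndepFun_iff_Indep X Y P).1 hXY).setIntegral_eq_mul hX.comap_le hY
          ⟨{b}, measurableSet_singleton b, rfl⟩ (hFm b).aestronglyMeasurable

end

/-- **Cross-moment identity of the real-valued one-step BDAR(1) setup.**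
`E[Z1·Z2] = φ12·E[Z1p·Z2p] + (φ1 - φ12)·E[Z1p]·E[ε2] + (φ2 - φ12)·E[ε1]·E[Z2p]
  + (1 - φ1 - φ2 + φ12)·E[ε1·ε2]`. -/
theorem bdar1_cross_moment
    {Ω : Type*} [MeasurableSpace Ω] (P : Measure Ω) [IsProbabilityMeasure P]
    (Z1p Z2p ε1 ε2 : Ω → ℝ) (α : Ω → Bool × Bool)
    (hZ1pm : Measurable Z1p) (hZ2pm : Measurable Z2p)
    (hε1m : Measurable ε1) (hε2m : Measurable ε2) (hαm : Measurable α)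
    (hZ1pb : ∃ C, ∀ ω, |Z1p ω| ≤ C) (hZ2pb : ∃ C, ∀ ω, |Z2p ω| ≤ C)
    (hε1b : ∃ C, ∀ ω, |ε1 ω| ≤ C) (hε2b : ∃ C, ∀ ω, |ε2 ω| ≤ C)
    -- α is independent of the quadruple (Z1p, Z2p, ε1, ε2)
    (hα : IndepFun α (fun ω => (Z1p ω, Z2p ω, ε1 ω, ε2 ω)) P)
    -- (ε1, ε2) is independent of (Z1p, Z2p)
    (hε : IndepFun (fun ω => (ε1 ω, ε2 ω)) (fun ω => (Z1p ω, Z2p ω)) P)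
    (Z1 Z2 : Ω → ℝ)
    (hZ1 : ∀ ω, Z1 ω = if (α ω).1 then Z1p ω else ε1 ω)
    (hZ2 : ∀ ω, Z2 ω = if (α ω).2 then Z2p ω else ε2 ω)
    (φ1 φ2 φ12 : ℝ)
    (hφ1 : φ1 = (P {ω | (α ω).1 = true}).toReal)
    (hφ2 : φ2 = (P {ω | (α ω).2 = true}).toReal)
    (hφ12 : φ12 = (P {ω | α ω = (true, true)}).toReal) :
    ∫ ω, Z1 ω * Z2 ω ∂P
      = φ12 * ∫ ω, Z1p ω * Z2p ω ∂P
        + (φ1 - φ12) * (∫ ω, Z1p ω ∂P) * (∫ ω, ε2 ω ∂P)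
        + (φ2 - φ12) * (∫ ω, ε1 ω ∂P) * (∫ ω, Z2p ω ∂P)
        + (1 - φ1 - φ2 + φ12) * ∫ ω, ε1 ω * ε2 ω ∂P := by
  let F : Bool × Bool → ℝ × ℝ × ℝ × ℝ → ℝ := fun a w =>
    (if a.1 then w.1 else w.2.2.1) * (if a.2 then w.2.1 else w.2.2.2)
  have hZ : ∫ ω, Z1 ω * Z2 ω ∂P = ∫ ω, F (α ω) (Z1p ω, Z2p ω, ε1 ω, ε2 ω) ∂P := by
    simp only [hZ1, hZ2, F]
  have hW : Measurable fun ω => (Z1p ω, Z2p ω, ε1 ω, ε2 ω) := by fun_prop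
  have hsplit := hα.integral_comp_eq_sum hαm hW.aemeasurable (F := F)
    (fun a => by simp only [F]; split_ifs <;> fun_prop) fun a => by
      rcases a with ⟨_ | _, _ | _⟩ <;> exact integrable_mul_of_bounded ‹_› ‹_› ‹_› ‹_›
  have hcross1 : ∫ ω, Z1p ω * ε2 ω ∂P = (∫ ω, Z1p ω ∂P) * ∫ ω, ε2 ω ∂P :=
    (hε.comp measurable_snd measurable_fst).symm.integral_mul_eq_mul_integral
      hZ1pm.aestronglyMeasurable hε2m.aestronglyMeasurable
  have hcross2 : ∫ ω, ε1 ω * Z2p ω ∂P = (∫ ω, ε1 ω ∂P) * ∫ ω, Z2p ω ∂P :=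
    (hε.comp measurable_fst measurable_snd).integral_mul_eq_mul_integral
      hε1m.aestronglyMeasurable hZ2pm.aestronglyMeasurable
  have hφ1' : φ1 = _ := hφ1.trans (measureReal_preimage_eq_sum hαm {a | a.1 = true})
  have hφ2' : φ2 = _ := hφ2.trans (measureReal_preimage_eq_sum hαm {a | a.2 = true})
  have hφ12' : φ12 = P.real (α ⁻¹' {(true, true)}) := hφ12
  have htotal := measureReal_preimage_eq_sum (P := P) hαm Set.univ
  simp only [F, Finset.sum_filter, Fintype.sum_prod_type, Fintype.sum_bool, Set.mem_ofPred_eq,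
    Set.mem_univ, Bool.false_eq_true, ↓reduceIte, Set.preimage_univ, probReal_univ, add_zero]
    at hsplit hφ1' hφ2' htotal
  rw [hZ, hsplit, hcross1, hcross2, hφ1', hφ2', hφ12']
  linear_combination -(∫ ω, ε1 ω * ε2 ω ∂P) * htotal
end
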